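/- arXiv:2503.14497 — 5 statements merged into one kernel-verified Lean document; each statement's English description precedes it below -/
import Mathlib

section
/- For every d >= 2 and every real r >= 0, both the discrete Euclidean ball B_r^2 = {x in Z^d : |x| <= r} and its complement {x in Z^d : |x| > r} are connected subsets of Z^d with respect to the nearest-neighbor graph structure. (In particular B_r^2 is simply connected in Z^d.) -/
open scoped BigOperators

/-- Nearest-neighbor adjacency on `ℤ^d`. -/
def latAdj {d : ℕ} (x y : Fin d → ℤ) : Prop := (∑ i : Fin d, |x i - y i|) = 1

/-- `*`-adjacency on `ℤ^d` (`ℓ^∞`-distance one). -/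
def latAdjStar {d : ℕ} (x y : Fin d → ℤ) : Prop := x ≠ y ∧ ∀ i : Fin d, |x i - y i| ≤ 1

/-- A nearest-neighbor path of length `k` staying in `S`. -/
def IsPathIn {d : ℕ} (S : Set (Fin d → ℤ)) (γ : ℕ → Fin d → ℤ) (k : ℕ) : Prop :=
  (∀ i ≤ k, γ i ∈ S) ∧ ∀ i < k, latAdj (γ i) (γ (i + 1))

/-- `x` and `y` are connected by a nearest-neighbor path inside `S`. -/
def ConnIn {d : ℕ} (S : Set (Fin d → ℤ)) (x y : Fin d → ℤ) : Prop :=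
  ∃ (γ : ℕ → Fin d → ℤ) (k : ℕ), IsPathIn S γ k ∧ γ 0 = x ∧ γ k = y

/-- A set is connected if any two of its points are joined by a path within it. -/
def ConnectedSet {d : ℕ} (S : Set (Fin d → ℤ)) : Prop :=
  ∀ x ∈ S, ∀ y ∈ S, ConnIn S x y

def IsStarPathIn {d : ℕ} (S : Set (Fin d → ℤ)) (γ : ℕ → Fin d → ℤ) (k : ℕ) : Prop :=
  (∀ i ≤ k, γ i ∈ S) ∧ ∀ i < k, latAdjStar (γ i) (γ (i + 1))

def StarConnIn {d : ℕ} (S : Set (Fin d → ℤ)) (x y : Fin d → ℤ) : Prop :=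
  ∃ (γ : ℕ → Fin d → ℤ) (k : ℕ), IsStarPathIn S γ k ∧ γ 0 = x ∧ γ k = y

def StarConnectedSet {d : ℕ} (S : Set (Fin d → ℤ)) : Prop :=
  ∀ x ∈ S, ∀ y ∈ S, StarConnIn S x y

/-- The connected component of `x` within `S`. -/
def connComp {d : ℕ} (S : Set (Fin d → ℤ)) (x : Fin d → ℤ) : Set (Fin d → ℤ) :=
  {y | ConnIn S x y}

def starConnComp {d : ℕ} (S : Set (Fin d → ℤ)) (x : Fin d → ℤ) : Set (Fin d → ℤ) :=
  {y | StarConnIn S x y}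

/-- Inner vertex boundary. -/
def innerBd {d : ℕ} (S : Set (Fin d → ℤ)) : Set (Fin d → ℤ) :=
  {x | x ∈ S ∧ ∃ y, y ∉ S ∧ latAdj x y}

/-- Outer vertex boundary. -/
def outerBd {d : ℕ} (S : Set (Fin d → ℤ)) : Set (Fin d → ℤ) :=
  {x | x ∉ S ∧ ∃ y ∈ S, latAdj x y}

/-- Closure: a set together with its outer boundary. -/
def clo {d : ℕ} (S : Set (Fin d → ℤ)) : Set (Fin d → ℤ) := S ∪ outerBd S

/-- `fill U`: union of `U` with all finite connected components of its complement. -/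
def fill {d : ℕ} (U : Set (Fin d → ℤ)) : Set (Fin d → ℤ) :=
  U ∪ {x | x ∉ U ∧ (connComp Uᶜ x).Finite}

/-- `Surr U A`: `U` is surrounded by `A`, i.e. every infinite connected set meeting `U`
meets `A`. -/
def Surr {d : ℕ} (U A : Set (Fin d → ℤ)) : Prop :=
  ∀ S : Set (Fin d → ℤ), S.Infinite → ConnectedSet S → (S ∩ U).Nonempty → (S ∩ A).Nonempty

/-- Euclidean norm of a lattice point. -/
noncomputable def eucNorm {d : ℕ} (x : Fin d → ℤ) : ℝ :=
  Real.sqrt (∑ i : Fin d, ((x i : ℝ)) ^ 2)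

/-- The range of a path of length `k`. -/
def pathPts {d : ℕ} (γ : ℕ → Fin d → ℤ) (k : ℕ) : Set (Fin d → ℤ) :=
  {p | ∃ i ≤ k, γ i = p}

namespace BallConnAux

variable {d : ℕ}

lemma latAdj_symm {x y : Fin d → ℤ} (h : latAdj x y) : latAdj y x := by
  unfold latAdj at *
  rw [← h]
  exact Finset.sum_congr rfl fun i _ => abs_sub_comm _ _

lemma connIn_refl {S : Set (Fin d → ℤ)} {x : Fin d → ℤ} (hx : x ∈ S) : ConnIn S x x :=
  ⟨fun _ => x, 0, ⟨fun _ _ => hx, fun i h => absurd h (Nat.not_lt_zero i)⟩, rfl, rfl⟩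

lemma connIn_symm {S : Set (Fin d → ℤ)} {x y : Fin d → ℤ} (h : ConnIn S x y) :
    ConnIn S y x := by
  obtain ⟨γ, k, ⟨hmem, hadj⟩, h0, hk⟩ := h
  refine ⟨fun i => γ (k - i), k, ⟨fun i hi => hmem _ (by omega), fun i hi => ?_⟩,
    by simpa using hk, by simpa using h0⟩
  show latAdj (γ (k - i)) (γ (k - (i + 1)))
  have h1 : k - i = (k - (i + 1)) + 1 := by omega
  rw [h1]
  exact latAdj_symm (hadj _ (by omega))

lemma connIn_trans {S : Set (Fin d → ℤ)} {x y z : Fin d → ℤ}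
    (h1 : ConnIn S x y) (h2 : ConnIn S y z) : ConnIn S x z := by
  obtain ⟨γ1, k1, ⟨hm1, ha1⟩, hs1, he1⟩ := h1
  obtain ⟨γ2, k2, ⟨hm2, ha2⟩, hs2, he2⟩ := h2
  refine ⟨fun i => if i ≤ k1 then γ1 i else γ2 (i - k1), k1 + k2, ⟨?_, ?_⟩, ?_, ?_⟩
  · intro i hi
    by_cases h : i ≤ k1
    · simpa [h] using hm1 i h
    · simpa [h] using hm2 (i - k1) (by omega)
  · intro i hi
    by_cases h : i + 1 ≤ k1
    · have h' : i ≤ k1 := by omega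
      simpa [h, h'] using ha1 i (by omega)
    · by_cases h' : i ≤ k1
      · have hik : i = k1 := by omega
        subst hik
        simp only [le_refl, if_pos, h, if_neg, if_false]
        have h2' : i + 1 - i = 1 := by omega
        rw [h2', he1, ← hs2]
        exact ha2 0 (by omega)
      · have e1 : i + 1 - k1 = (i - k1) + 1 := by omega
        simp only [h, h', if_false]
        rw [e1]
        exact ha2 (i - k1) (by omega)
  · simp [hs1]
  · by_cases h : k2 = 0
    · subst h
      simp only [Nat.add_zero, le_refl, if_pos]
      rw [he1, ← hs2]
      exact he2
    · have h' : ¬ (k1 + k2 ≤ k1) := by omega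
      simp only [h', if_false]
      simpa using he2

lemma connIn_mono {S T : Set (Fin d → ℤ)} (hST : S ⊆ T) {x y : Fin d → ℤ}
    (h : ConnIn S x y) : ConnIn T x y := by
  obtain ⟨γ, k, ⟨hmem, hadj⟩, h0, hk⟩ := h
  exact ⟨γ, k, ⟨fun i hi => hST (hmem i hi), hadj⟩, h0, hk⟩

lemma connIn_step {S : Set (Fin d → ℤ)} {x y : Fin d → ℤ} (hx : x ∈ S) (hy : y ∈ S)
    (h : latAdj x y) : ConnIn S x y := by
  refine ⟨fun i => if i = 0 then x else y, 1, ⟨?_, ?_⟩, by simp, by simp⟩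
  · intro i hi
    by_cases h0 : i = 0 <;> simp [h0, hx, hy]
  · intro i hi
    have : i = 0 := by omega
    subst this
    simpa using h

lemma latAdj_update {x : Fin d → ℤ} {i : Fin d} {t : ℤ} (h : |x i - t| = 1) :
    latAdj x (Function.update x i t) := by
  unfold latAdj
  rw [Finset.sum_eq_single i]
  · simpa using h
  · intro j _ hj
    simp [Function.update_of_ne hj]
  · simp

lemma connIn_line {S : Set (Fin d → ℤ)} (i : Fin d) (b : ℤ) :
    ∀ (n : ℕ) (x : Fin d → ℤ), (b - x i).natAbs = n →
      (∀ t : ℤ, min (x i) b ≤ t → t ≤ max (x i) b → Function.update x i t ∈ S) →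
      ConnIn S x (Function.update x i b)
  | 0, x, hn, hS => by
      have hb : b = x i := by omega
      subst hb
      rw [Function.update_eq_self]
      have := hS (x i) (by omega) (by omega)
      rw [Function.update_eq_self] at this
      exact connIn_refl this
  | (n + 1), x, hn, hS => by
      have hne : x i ≠ b := by omega
      set s : ℤ := if x i < b then 1 else -1 with hs
      have hsi : s = 1 ∨ s = -1 := by
        by_cases h : x i < b <;> simp [hs, h]
      have hsgn : (x i < b ∧ s = 1) ∨ (b < x i ∧ s = -1) := by
        rcases lt_or_gt_of_ne hne with h | h
        · exact Or.inl ⟨h, by simp [hs, h]⟩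
        · exact Or.inr ⟨h, by simp [hs, not_lt.mpr (le_of_lt h)]⟩
      set y := Function.update x i (x i + s) with hy
      have hyi : y i = x i + s := by simp [hy]
      have hyS : y ∈ S := by
        apply hS
        · rcases hsgn with ⟨h, h1⟩ | ⟨h, h1⟩ <;> omega
        · rcases hsgn with ⟨h, h1⟩ | ⟨h, h1⟩ <;> omega
      have hxS : x ∈ S := by
        have := hS (x i) (by omega) (by omega)
        rwa [Function.update_eq_self] at this
      have hadj : latAdj x y := by
        apply latAdj_update
        have h2 : x i - (x i + s) = -s := by ring
        rw [h2]
        rcases hsi with h | h <;> rw [h] <;> norm_num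
      have hrec : ConnIn S y (Function.update y i b) := by
        apply connIn_line i b n y
        · rw [hyi]; rcases hsgn with ⟨h, h1⟩ | ⟨h, h1⟩ <;> omega
        · intro t ht1 ht2
          rw [hyi] at ht1 ht2
          rw [hy, Function.update_idem]
          apply hS
          · rcases hsgn with ⟨h, h1⟩ | ⟨h, h1⟩ <;> omega
          · rcases hsgn with ⟨h, h1⟩ | ⟨h, h1⟩ <;> omega
      have hub : Function.update y i b = Function.update x i b := by
        rw [hy, Function.update_idem]
      rw [hub] at hrec
      exact connIn_trans (connIn_step hxS hyS hadj) hrec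




lemma update_comp_sq (x : Fin d → ℤ) (i : Fin d) (t : ℤ) :
    (fun j => ((Function.update x i t j : ℤ) : ℝ) ^ 2) =
      Function.update (fun j => ((x j : ℤ) : ℝ) ^ 2) i (((t : ℤ) : ℝ) ^ 2) := by
  funext j
  by_cases h : j = i
  · subst h; simp
  · simp [Function.update_of_ne h]

lemma sq_sum_update (x : Fin d → ℤ) (i : Fin d) (t : ℤ) :
    (∑ j, ((Function.update x i t j : ℤ) : ℝ) ^ 2) =
      (∑ j, ((x j : ℤ) : ℝ) ^ 2) - ((x i : ℤ) : ℝ) ^ 2 + ((t : ℤ) : ℝ) ^ 2 := by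
  rw [update_comp_sq, Finset.sum_update_of_mem (Finset.mem_univ i),
    Finset.sum_eq_sum_sdiff_singleton_add (Finset.mem_univ i) (fun j => ((x j : ℤ) : ℝ) ^ 2)]
  ring

lemma eucNorm_update_le {x : Fin d → ℤ} {i : Fin d} {t : ℤ} (h : t ^ 2 ≤ (x i) ^ 2) :
    eucNorm (Function.update x i t) ≤ eucNorm x := by
  unfold eucNorm
  apply Real.sqrt_le_sqrt
  rw [sq_sum_update]
  have h' : ((t : ℤ) : ℝ) ^ 2 ≤ ((x i : ℤ) : ℝ) ^ 2 := by exact_mod_cast h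
  linarith

lemma eucNorm_le_update {x : Fin d → ℤ} {i : Fin d} {t : ℤ} (h : (x i) ^ 2 ≤ t ^ 2) :
    eucNorm x ≤ eucNorm (Function.update x i t) := by
  unfold eucNorm
  apply Real.sqrt_le_sqrt
  rw [sq_sum_update]
  have h' : ((x i : ℤ) : ℝ) ^ 2 ≤ ((t : ℤ) : ℝ) ^ 2 := by exact_mod_cast h
  linarith

lemma abs_le_eucNorm (x : Fin d → ℤ) (i : Fin d) : ((|x i| : ℤ) : ℝ) ≤ eucNorm x := by
  have h1 : ((x i : ℤ) : ℝ) ^ 2 ≤ ∑ j, ((x j : ℤ) : ℝ) ^ 2 :=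
    Finset.single_le_sum (f := fun j => ((x j : ℤ) : ℝ) ^ 2) (fun j _ => sq_nonneg _)
      (Finset.mem_univ i)
  calc ((|x i| : ℤ) : ℝ) = |((x i : ℤ) : ℝ)| := by push_cast; ring
    _ = Real.sqrt (((x i : ℤ) : ℝ) ^ 2) := (Real.sqrt_sq_eq_abs _).symm
    _ ≤ eucNorm x := Real.sqrt_le_sqrt h1

lemma update_comp_measure (x : Fin d → ℤ) (i0 i : Fin d) (hi : i ≠ i0) :
    (fun j => if j = i0 then 0 else ((Function.update x i 0 j).natAbs)) =
      Function.update (fun j => if j = i0 then 0 else (x j).natAbs) i 0 := by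
  funext j
  by_cases h : j = i
  · subst h; simp [hi]
  · simp [Function.update_of_ne h]

lemma sum_measure_update (x : Fin d → ℤ) (i0 i : Fin d) (hi : i ≠ i0) :
    (∑ j, if j = i0 then 0 else ((Function.update x i 0 j).natAbs)) + (x i).natAbs =
      ∑ j, if j = i0 then 0 else (x j).natAbs := by
  rw [update_comp_measure x i0 i hi, Finset.sum_update_of_mem (Finset.mem_univ i),
    Finset.sum_eq_sum_sdiff_singleton_add (Finset.mem_univ i)
      (fun j => if j = i0 then 0 else (x j).natAbs)]
  simp [hi]

lemma update_comp_natAbs (x : Fin d → ℤ) (i : Fin d) :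
    (fun j => (Function.update x i 0 j).natAbs) =
      Function.update (fun j => (x j).natAbs) i 0 := by
  funext j
  by_cases h : j = i
  · subst h; simp
  · simp [Function.update_of_ne h]

lemma sum_natAbs_update (x : Fin d → ℤ) (i : Fin d) :
    (∑ j, (Function.update x i 0 j).natAbs) + (x i).natAbs = ∑ j, (x j).natAbs := by
  rw [update_comp_natAbs, Finset.sum_update_of_mem (Finset.mem_univ i),
    Finset.sum_eq_sum_sdiff_singleton_add (Finset.mem_univ i) (fun j => (x j).natAbs)]
  simp

lemma ball_conn_zero {r : ℝ} :
    ∀ (n : ℕ) (x : Fin d → ℤ), (∑ j, (x j).natAbs) = n → eucNorm x ≤ r →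
      ConnIn {x : Fin d → ℤ | eucNorm x ≤ r} x 0 := by
  intro n
  induction n using Nat.strong_induction_on with
  | _ n ih =>
    intro x hn hx
    by_cases h0 : x = 0
    · subst h0; exact connIn_refl hx
    · have hex : ∃ i, x i ≠ 0 := by
        by_contra h
        push_neg at h
        exact h0 (funext h)
      obtain ⟨i, hi⟩ := hex
      have hline : ConnIn {x : Fin d → ℤ | eucNorm x ≤ r} x (Function.update x i 0) := by
        apply connIn_line i 0 _ x rfl
        intro t ht1 ht2
        have hsq : t ^ 2 ≤ (x i) ^ 2 := by
          rcases le_or_gt 0 (x i) with h | h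
          · have h1 : 0 ≤ t := by omega
            have h2 : t ≤ x i := by omega
            nlinarith
          · have h1 : t ≤ 0 := by omega
            have h2 : x i ≤ t := by omega
            nlinarith
        exact le_trans (eucNorm_update_le hsq) hx
      have hxu : eucNorm (Function.update x i 0) ≤ r :=
        le_trans (eucNorm_update_le (by positivity)) hx
      have hlt : (∑ j, (Function.update x i 0 j).natAbs) < n := by
        have := sum_natAbs_update x i
        have hpos : 0 < (x i).natAbs := by omega
        omega
      exact connIn_trans hline (ih _ hlt _ rfl hxu)


lemma zero_others (M : ℤ) (i0 : Fin d) :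
    ∀ (n : ℕ) (x : Fin d → ℤ), (∑ j, if j = i0 then 0 else (x j).natAbs) = n →
      M ≤ |x i0| →
      ConnIn {x : Fin d → ℤ | ∃ i, M ≤ |x i|} x (fun j => if j = i0 then x i0 else 0) := by
  intro n
  induction n using Nat.strong_induction_on with
  | _ n ih =>
    intro x hn hM
    by_cases h0 : x = fun j => if j = i0 then x i0 else 0
    · rw [← h0]; exact connIn_refl ⟨i0, hM⟩
    · have hex : ∃ j, j ≠ i0 ∧ x j ≠ 0 := by
        by_contra h
        push_neg at h
        apply h0
        funext j
        by_cases hj : j = i0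
        · simp [hj]
        · simp [hj, h j hj]
      obtain ⟨j, hj, hjne⟩ := hex
      have hline : ConnIn {x : Fin d → ℤ | ∃ i, M ≤ |x i|} x (Function.update x j 0) := by
        apply connIn_line j 0 _ x rfl
        intro t _ _
        exact ⟨i0, by rw [Function.update_of_ne (Ne.symm hj)]; exact hM⟩
      have hM' : M ≤ |Function.update x j 0 i0| := by
        rw [Function.update_of_ne (Ne.symm hj)]; exact hM
      have hlt : (∑ j', if j' = i0 then 0 else ((Function.update x j 0 j').natAbs)) < n := by
        have h1 := sum_measure_update x i0 j hj
        have hpos : 0 < (x j).natAbs := by omega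
        omega
      have hrec := ih _ hlt (Function.update x j 0) rfl hM'
      have heq : (fun j' => if j' = i0 then Function.update x j 0 i0 else 0) =
          (fun j' => if j' = i0 then x i0 else 0) := by
        rw [Function.update_of_ne (Ne.symm hj)]
      rw [heq] at hrec
      exact connIn_trans hline hrec

lemma line_to_e (M : ℤ) (hM : 1 ≤ M) (i0 i1 : Fin d) (hne : i1 ≠ i0) (a : ℤ)
    (ha : M ≤ |a|) :
    ConnIn {x : Fin d → ℤ | ∃ i, M ≤ |x i|}
      (fun j => if j = i0 then a else 0) (fun j => if j = i0 then M else 0) := by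
  set T : Set (Fin d → ℤ) := {x | ∃ i, M ≤ |x i|} with hT
  set p : ℤ → (Fin d → ℤ) := fun v j => if j = i0 then v else 0 with hp
  have hpi0 : ∀ v, p v i0 = v := fun v => by simp [hp]
  have hupd : ∀ v w, Function.update (p v) i0 w = p w := by
    intro v w
    funext j
    by_cases h : j = i0
    · subst h; simp [hp]
    · simp [hp, Function.update_of_ne h, h]
  show ConnIn T (p a) (p M)
  rcases le_or_gt 0 a with hpos | hneg
  · rw [abs_of_nonneg hpos] at ha
    have hcond : ∀ t : ℤ, min ((p a) i0) M ≤ t → t ≤ max ((p a) i0) M →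
        Function.update (p a) i0 t ∈ T := by
      intro t ht1 ht2
      rw [hpi0] at ht1 ht2
      refine ⟨i0, ?_⟩
      rw [hupd, hpi0, abs_of_nonneg (by omega)]
      omega
    have := connIn_line (S := T) i0 M _ (p a) rfl hcond
    rwa [hupd] at this
  · rw [abs_of_neg hneg] at ha
    have s1 : ConnIn T (p a) (p (-M)) := by
      have hcond : ∀ t : ℤ, min ((p a) i0) (-M) ≤ t → t ≤ max ((p a) i0) (-M) →
          Function.update (p a) i0 t ∈ T := by
        intro t ht1 ht2
        rw [hpi0] at ht1 ht2
        refine ⟨i0, ?_⟩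
        rw [hupd, hpi0, abs_of_nonpos (by omega)]
        omega
      have := connIn_line (S := T) i0 (-M) _ (p a) rfl hcond
      rwa [hupd] at this
    set q : Fin d → ℤ := Function.update (p (-M)) i1 M with hq
    have hqi0 : q i0 = -M := by
      rw [hq, Function.update_of_ne (Ne.symm hne)]
      exact hpi0 (-M)
    have hqi1 : q i1 = M := by rw [hq, Function.update_self]
    have s2 : ConnIn T (p (-M)) q := by
      apply connIn_line i1 M _ (p (-M)) rfl
      intro t _ _
      refine ⟨i0, ?_⟩
      rw [Function.update_of_ne (Ne.symm hne), hpi0, abs_of_nonpos (by omega)]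
      omega
    set q2 : Fin d → ℤ := Function.update q i0 M with hq2
    have hq2i0 : q2 i0 = M := by rw [hq2, Function.update_self]
    have hq2i1 : q2 i1 = M := by
      rw [hq2, Function.update_of_ne hne]
      exact hqi1
    have s3 : ConnIn T q q2 := by
      apply connIn_line i0 M _ q rfl
      intro t _ _
      refine ⟨i1, ?_⟩
      rw [Function.update_of_ne hne, hqi1, abs_of_nonneg (by omega)]
    have s4 : ConnIn T q2 (Function.update q2 i1 0) := by
      apply connIn_line i1 0 _ q2 rfl
      intro t _ _
      refine ⟨i0, ?_⟩
      rw [Function.update_of_ne (Ne.symm hne), hq2i0, abs_of_nonneg (by omega)]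
    have hfin : Function.update q2 i1 0 = p M := by
      funext j
      by_cases h1 : j = i1
      · subst h1
        rw [Function.update_self, hp]
        simp [hne]
      · rw [Function.update_of_ne h1]
        by_cases h0 : j = i0
        · subst h0
          rw [hq2i0, hpi0]
        · rw [hq2, Function.update_of_ne h0, hq, Function.update_of_ne h1]
          simp [hp, h0]
    rw [hfin] at s4
    exact connIn_trans s1 (connIn_trans s2 (connIn_trans s3 s4))

end BallConnAux

/-- For `d ≥ 2` and `r ≥ 0`, the discrete Euclidean ball `{x ∈ ℤ^d : |x| ≤ r}` and its
complement `{x : r < |x|}` are both connected for the nearest-neighbor graph structure. -/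
theorem ball_and_complement_connected {d : ℕ} (hd : 2 ≤ d) (r : ℝ) (hr : 0 ≤ r) :
    ConnectedSet {x : Fin d → ℤ | eucNorm x ≤ r} ∧
    ConnectedSet {x : Fin d → ℤ | r < eucNorm x} := by
  classical
  constructor
  · intro x hx y hy
    exact BallConnAux.connIn_trans (BallConnAux.ball_conn_zero _ x rfl hx)
      (BallConnAux.connIn_symm (BallConnAux.ball_conn_zero _ y rfl hy))
  · set M : ℤ := ⌈r⌉ + 1 with hMdef
    have hM1 : 1 ≤ M := by
      have h0 : 0 ≤ ⌈r⌉ := Int.ceil_nonneg hr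
      omega
    have hMr : r < (M : ℝ) := by
      have h1 := Int.le_ceil r
      rw [hMdef]
      push_cast
      linarith
    set i0 : Fin d := ⟨0, by omega⟩ with hi0
    set i1 : Fin d := ⟨1, by omega⟩ with hi1
    have hne : i1 ≠ i0 := by simp [hi0, hi1, Fin.ext_iff]
    set T : Set (Fin d → ℤ) := {x | ∃ i, M ≤ |x i|} with hT
    have hTsub : T ⊆ {x : Fin d → ℤ | r < eucNorm x} := by
      rintro x ⟨i, hi⟩
      have h1 : ((M : ℤ) : ℝ) ≤ ((|x i| : ℤ) : ℝ) := by exact_mod_cast hi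
      exact lt_of_lt_of_le hMr (le_trans h1 (BallConnAux.abs_le_eucNorm x i))
    have stepA : ∀ x : Fin d → ℤ, r < eucNorm x →
        ∃ b : ℤ, M ≤ |b| ∧
          ConnIn {x : Fin d → ℤ | r < eucNorm x} x (Function.update x i0 b) := by
      intro x hx
      rcases le_or_gt 0 (x i0) with h | h
      · refine ⟨x i0 + M, by rw [abs_of_nonneg (by omega)]; omega, ?_⟩
        apply BallConnAux.connIn_line i0 (x i0 + M) _ x rfl
        intro t ht1 ht2
        have h1 : x i0 ≤ t := by omega
        have hsq : (x i0) ^ 2 ≤ t ^ 2 := by nlinarith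
        exact lt_of_lt_of_le hx (BallConnAux.eucNorm_le_update hsq)
      · refine ⟨x i0 - M, by rw [abs_of_nonpos (by omega)]; omega, ?_⟩
        apply BallConnAux.connIn_line i0 (x i0 - M) _ x rfl
        intro t ht1 ht2
        have h1 : t ≤ x i0 := by omega
        have hsq : (x i0) ^ 2 ≤ t ^ 2 := by nlinarith
        exact lt_of_lt_of_le hx (BallConnAux.eucNorm_le_update hsq)
    have toE : ∀ x : Fin d → ℤ, r < eucNorm x →
        ConnIn {x : Fin d → ℤ | r < eucNorm x} x (fun j => if j = i0 then M else 0) := by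
      intro x hx
      obtain ⟨b, hb, hA⟩ := stepA x hx
      have hx1i0 : Function.update x i0 b i0 = b := Function.update_self _ _ _
      have hB : ConnIn T (Function.update x i0 b)
          (fun j => if j = i0 then Function.update x i0 b i0 else 0) :=
        BallConnAux.zero_others M i0 _ (Function.update x i0 b) rfl
          (by rw [hx1i0]; exact hb)
      rw [hx1i0] at hB
      have hC : ConnIn T (fun j => if j = i0 then b else 0)
          (fun j => if j = i0 then M else 0) :=
        BallConnAux.line_to_e M hM1 i0 i1 hne b hb
      exact BallConnAux.connIn_trans hA
        (BallConnAux.connIn_mono hTsub (BallConnAux.connIn_trans hB hC))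
    intro x hx y hy
    exact BallConnAux.connIn_trans (toE x hx) (BallConnAux.connIn_symm (toE y hy))
end

section
/- For every finite subset U of Z^d, the exterior boundary of U equals the outer boundary of Fill(U); that is, the inner vertex boundary of the unique infinite connected component of U^c coincides with the set of points of (Fill U)^c having a nearest neighbor in Fill(U). Here Fill(U) is the union of U with all finite connected components of U^c. -/
open scoped BigOperators

lemma connIn_refl {d : ℕ} {S : Set (Fin d → ℤ)} {x : Fin d → ℤ} (h : x ∈ S) : ConnIn S x x :=
  ⟨fun _ => x, 0, ⟨fun _ _ => h, fun i hi => absurd hi (Nat.not_lt_zero i)⟩, rfl, rfl⟩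

lemma latAdj_symm {d : ℕ} {x y : Fin d → ℤ} (h : latAdj x y) : latAdj y x := by
  unfold latAdj at *
  simpa [abs_sub_comm] using h

lemma connIn_symm {d : ℕ} {S : Set (Fin d → ℤ)} {x y : Fin d → ℤ}
    (h : ConnIn S x y) : ConnIn S y x := by
  obtain ⟨γ, k, ⟨hmem, hadj⟩, h0, hk⟩ := h
  refine ⟨fun i => γ (k - i), k, ⟨fun i _ => hmem _ (Nat.sub_le _ _), ?_⟩,
    by simp [hk], by simp [h0]⟩
  intro i hi
  show latAdj (γ (k - i)) (γ (k - (i + 1)))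
  have e : k - i = (k - (i + 1)) + 1 := by omega
  rw [e]
  exact latAdj_symm (hadj _ (by omega))

lemma connIn_trans {d : ℕ} {S : Set (Fin d → ℤ)} {x y z : Fin d → ℤ}
    (h1 : ConnIn S x y) (h2 : ConnIn S y z) : ConnIn S x z := by
  obtain ⟨γ, k, ⟨hm, ha⟩, h0, hk⟩ := h1
  obtain ⟨δ, l, ⟨hm', ha'⟩, h0', hl'⟩ := h2
  refine ⟨fun i => if i ≤ k then γ i else δ (i - k), k + l, ⟨?_, ?_⟩, ?_, ?_⟩
  · intro i hi
    by_cases h : i ≤ k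
    · simpa [h] using hm i h
    · simp only [if_neg h]; exact hm' _ (by omega)
  · intro i hi
    rcases lt_or_ge i k with h | h
    · simp only [if_pos (by omega : i ≤ k), if_pos (by omega : i + 1 ≤ k)]
      exact ha i h
    · have e1 : (if i ≤ k then γ i else δ (i - k)) = δ (i - k) := by
        by_cases h' : i ≤ k
        · have : i = k := le_antisymm h' h
          subst this
          simp [hk, h0']
        · simp [h']
      have e2 : (if i + 1 ≤ k then γ (i + 1) else δ (i + 1 - k)) = δ (i - k + 1) := by
        rw [if_neg (by omega), show i + 1 - k = i - k + 1 by omega]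
      simp only [e1, e2]
      exact ha' _ (by omega)
  · simp [h0]
  · show (if k + l ≤ k then γ (k + l) else δ (k + l - k)) = z
    by_cases hl0 : l = 0
    · subst hl0
      rw [if_pos (by omega), Nat.add_zero, hk, ← h0', hl']
    · rw [if_neg (by omega), show k + l - k = l by omega, hl']

lemma connIn_mono {d : ℕ} {S S' : Set (Fin d → ℤ)} (hss : S ⊆ S') {x y : Fin d → ℤ}
    (h : ConnIn S x y) : ConnIn S' x y := by
  obtain ⟨γ, k, ⟨hm, ha⟩, h0, hk⟩ := h
  exact ⟨γ, k, ⟨fun i hi => hss (hm i hi), ha⟩, h0, hk⟩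

lemma connIn_mem {d : ℕ} {S : Set (Fin d → ℤ)} {x y : Fin d → ℤ}
    (h : ConnIn S x y) : x ∈ S ∧ y ∈ S := by
  obtain ⟨γ, k, ⟨hm, _⟩, h0, hk⟩ := h
  exact ⟨h0 ▸ hm 0 (Nat.zero_le k), hk ▸ hm k le_rfl⟩

lemma connComp_eq_of_connIn {d : ℕ} {S : Set (Fin d → ℤ)} {x z : Fin d → ℤ}
    (h : ConnIn S x z) : connComp S z = connComp S x := by
  ext y
  exact ⟨fun hy => connIn_trans h hy, fun hy => connIn_trans (connIn_symm h) hy⟩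

lemma latAdj_update {d : ℕ} (x : Fin d → ℤ) (i : Fin d) (a : ℤ) :
    latAdj (Function.update x i a) (Function.update x i (a + 1)) := by
  unfold latAdj
  rw [Finset.sum_eq_single i]
  · simp
  · intro j _ hj
    rw [Function.update_of_ne hj, Function.update_of_ne hj]
    simp
  · simp

lemma connIn_up {d : ℕ} (S : Set (Fin d → ℤ)) (x : Fin d → ℤ) (i : Fin d) (n : ℕ)
    (h : ∀ m : ℕ, m ≤ n → Function.update x i (x i + m) ∈ S) :
    ConnIn S x (Function.update x i (x i + n)) := by
  refine ⟨fun m => Function.update x i (x i + (min m n : ℕ)), n, ⟨?_, ?_⟩, ?_, ?_⟩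
  · intro m _
    exact h _ (min_le_right _ _)
  · intro m hm
    show latAdj (Function.update x i (x i + (min m n : ℕ)))
      (Function.update x i (x i + (min (m + 1) n : ℕ)))
    rw [min_eq_left (by omega : m ≤ n), min_eq_left (by omega : m + 1 ≤ n)]
    have : x i + ((m + 1 : ℕ) : ℤ) = (x i + (m : ℕ)) + 1 := by push_cast; ring
    rw [this]
    exact latAdj_update x i _
  · show Function.update x i (x i + (min 0 n : ℕ)) = x
    simp
  · show Function.update x i (x i + (min n n : ℕ)) = _
    simp

lemma connIn_seg {d : ℕ} (S : Set (Fin d → ℤ)) (x : Fin d → ℤ) (i : Fin d) (t : ℤ)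
    (h : ∀ s : ℤ, min (x i) t ≤ s → s ≤ max (x i) t → Function.update x i s ∈ S) :
    ConnIn S x (Function.update x i t) := by
  rcases le_total (x i) t with ht | ht
  · obtain ⟨n, hn⟩ : ∃ n : ℕ, t = x i + n := ⟨(t - x i).toNat, by omega⟩
    subst hn
    exact connIn_up S x i n fun m hm => h _
      ((min_le_left _ _).trans (by omega)) ((by omega : x i + (m : ℤ) ≤ x i + n).trans (le_max_right _ _))
  · obtain ⟨n, hn⟩ : ∃ n : ℕ, t = x i - n := ⟨(x i - t).toNat, by omega⟩
    subst hn
    set y := Function.update x i (x i - n) with hy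
    have hyi : y i = x i - n := Function.update_self i _ x
    have hmem : ∀ m : ℕ, m ≤ n → Function.update y i (y i + m) ∈ S := by
      intro m hm
      rw [hyi, hy, Function.update_idem]
      exact h _ ((min_le_right _ _).trans (by omega))
        ((by omega : x i - n + (m : ℤ) ≤ x i).trans (le_max_left _ _))
    have h2 := connIn_up S y i n hmem
    have hyx : Function.update y i (y i + (n : ℤ)) = x := by
      rw [hyi, hy, Function.update_idem, show x i - n + n = x i by ring,
        Function.update_eq_self]
    rw [hyx] at h2
    exact connIn_symm h2

def outSet {d : ℕ} (R : ℤ) : Set (Fin d → ℤ) := {y | ∃ i, R < |y i|}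

def qpt {d : ℕ} (M : ℤ) (i : Fin d) (ε : ℤ) : Fin d → ℤ := fun j => if j = i then ε * M else 0

lemma zero_out {d : ℕ} (R M : ℤ) (hRM : R < M) (x : Fin d → ℤ) (i0 : Fin d)
    (hx : |x i0| = M) (T : Finset (Fin d)) (hT : i0 ∉ T) :
    ConnIn (outSet R) x (fun j => if j ∈ T then 0 else x j) := by
  classical
  revert hT
  induction T using Finset.induction_on with
  | empty =>
    intro _
    have : (fun j => if j ∈ (∅ : Finset (Fin d)) then 0 else x j) = x := by
      funext j; simp
    rw [this]
    exact connIn_refl ⟨i0, hx ▸ hRM⟩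
  | @insert j T hj ih =>
    intro hT
    have hji0 : j ≠ i0 := fun h => hT (h ▸ Finset.mem_insert_self j T)
    have hi0T : i0 ∉ T := fun h => hT (Finset.mem_insert_of_mem h)
    have h1 := ih hi0T
    set yT : Fin d → ℤ := fun k => if k ∈ T then 0 else x k with hyT
    have h2 : ConnIn (outSet R) yT (Function.update yT j 0) := by
      apply connIn_seg
      intro s _ _
      refine ⟨i0, ?_⟩
      rw [Function.update_of_ne (Ne.symm hji0)]
      show R < |if i0 ∈ T then 0 else x i0|
      rw [if_neg hi0T, hx]
      exact hRM
    have h3 : Function.update yT j 0 = fun k => if k ∈ insert j T then 0 else x k := by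
      funext k
      by_cases hk : k = j
      · subst hk; simp
      · rw [Function.update_of_ne hk, hyT]
        simp [Finset.mem_insert, hk]
    rw [h3] at h2
    exact connIn_trans h1 h2

lemma reach {d : ℕ} (R M : ℤ) (hR : 0 ≤ R) (a : Fin d → ℤ) (i0 : Fin d)
    (h0 : R < |a i0|) (hM : |a i0| ≤ M) :
    ∃ ε : ℤ, |ε| = 1 ∧ ConnIn (outSet R) a (qpt M i0 ε) := by
  classical
  have hM0 : 0 ≤ M := (abs_nonneg _).trans hM
  have hRM : R < M := lt_of_lt_of_le h0 hM
  have hle : a i0 ≤ M := (le_abs_self _).trans hM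
  have hge : -M ≤ a i0 := by
    have := neg_abs_le (a i0); omega
  obtain ⟨ε, hε, hseg⟩ : ∃ ε : ℤ, |ε| = 1 ∧
      ∀ s : ℤ, min (a i0) (ε * M) ≤ s → s ≤ max (a i0) (ε * M) → R < |s| := by
    rcases lt_abs.mp h0 with hs | hs
    · refine ⟨1, by norm_num, fun s h1 h2 => ?_⟩
      have h1' : a i0 ≤ s := le_trans (le_min (le_refl _) (by omega)) h1
      exact lt_of_lt_of_le (by omega) (le_abs_self s)
    · refine ⟨-1, by norm_num, fun s h1 h2 => ?_⟩
      have h2' : s ≤ a i0 := le_trans h2 (max_le (le_refl _) (by omega))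
      exact lt_of_lt_of_le (by omega) (neg_le_abs s)
  have step1 : ConnIn (outSet R) a (Function.update a i0 (ε * M)) := by
    apply connIn_seg
    intro s h1 h2
    exact ⟨i0, by rw [Function.update_self]; exact hseg s h1 h2⟩
  have hval : |Function.update a i0 (ε * M) i0| = M := by
    rw [Function.update_self, abs_mul, hε, one_mul, abs_of_nonneg hM0]
  have step2 := zero_out R M hRM (Function.update a i0 (ε * M)) i0 hval
    ({i0}ᶜ) (by simp)
  have heq : (fun j => if j ∈ ({i0}ᶜ : Finset (Fin d)) then 0
      else Function.update a i0 (ε * M) j) = qpt M i0 ε := by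
    funext j
    by_cases hj : j = i0
    · subst hj
      simp [qpt]
    · simp [qpt, hj, Function.update_of_ne hj]
  rw [heq] at step2
  exact ⟨ε, hε, connIn_trans step1 step2⟩

lemma q_conn_pair {d : ℕ} (R M : ℤ) (hR : 0 ≤ R) (hRM : R < M) (i j : Fin d) (hij : i ≠ j)
    (ε : ℤ) (hε : |ε| = 1) :
    ConnIn (outSet R) (qpt M i ε) (qpt M j 1) := by
  classical
  have hM0 : (0:ℤ) ≤ M := hR.trans hRM.le
  have hqi : qpt M i ε i = ε * M := by simp [qpt]
  have habs : |ε * M| = M := by rw [abs_mul, hε, one_mul, abs_of_nonneg hM0]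
  set p0 := qpt M i ε with hp0
  have stepA : ConnIn (outSet R) p0 (Function.update p0 j M) := by
    apply connIn_seg
    intro s _ _
    refine ⟨i, ?_⟩
    rw [Function.update_of_ne hij, hqi, habs]
    exact hRM
  set p1 := Function.update p0 j M with hp1
  have hp1j : p1 j = M := Function.update_self j M p0
  have stepB : ConnIn (outSet R) p1 (Function.update p1 i 0) := by
    apply connIn_seg
    intro s _ _
    refine ⟨j, ?_⟩
    rw [Function.update_of_ne (Ne.symm hij), hp1j, abs_of_nonneg hM0]
    exact hRM
  have heq : Function.update p1 i 0 = qpt M j 1 := by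
    funext k
    by_cases hk : k = i
    · subst hk
      rw [Function.update_self]
      simp [qpt, hij]
    · rw [Function.update_of_ne hk, hp1, hp0]
      by_cases hk2 : k = j
      · subst hk2
        simp [qpt]
      · rw [Function.update_of_ne hk2]
        simp [qpt, hk, hk2]
  rw [heq] at stepB
  exact connIn_trans stepA stepB

lemma q_conn {d : ℕ} (hd : 2 ≤ d) (R M : ℤ) (hR : 0 ≤ R) (hRM : R < M)
    (i i' : Fin d) (ε ε' : ℤ) (hε : |ε| = 1) (hε' : |ε'| = 1) :
    ConnIn (outSet R) (qpt M i ε) (qpt M i' ε') := by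
  have : Nontrivial (Fin d) := Fin.nontrivial_iff_two_le.mpr hd
  obtain ⟨j, hj⟩ := exists_ne i
  have h1 : ConnIn (outSet R) (qpt M i ε) (qpt M j 1) :=
    q_conn_pair R M hR hRM i j (Ne.symm hj) ε hε
  by_cases hi'j : i' = j
  · subst hi'j
    have h2 : ConnIn (outSet R) (qpt M i' ε') (qpt M i 1) :=
      q_conn_pair R M hR hRM i' i hj ε' hε'
    have h3 : ConnIn (outSet R) (qpt M i 1) (qpt M i' 1) :=
      q_conn_pair R M hR hRM i i' (Ne.symm hj) 1 (by norm_num)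
    exact connIn_trans h1 (connIn_trans (connIn_symm h3) (connIn_symm h2))
  · have h2 : ConnIn (outSet R) (qpt M i' ε') (qpt M j 1) :=
      q_conn_pair R M hR hRM i' j hi'j ε' hε'
    exact connIn_trans h1 (connIn_symm h2)

lemma out_conn {d : ℕ} (hd : 2 ≤ d) (R : ℤ) (hR : 0 ≤ R) (a b : Fin d → ℤ)
    (ha : a ∈ outSet R) (hb : b ∈ outSet R) : ConnIn (outSet (d := d) R) a b := by
  obtain ⟨ia, hia⟩ := ha
  obtain ⟨ib, hib⟩ := hb
  set M : ℤ := max (|a ia|) (|b ib|) with hM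
  have hRM : R < M := lt_of_lt_of_le hia (le_max_left _ _)
  obtain ⟨ε, hε, hca⟩ := reach R M hR a ia hia (le_max_left _ _)
  obtain ⟨ε', hε', hcb⟩ := reach R M hR b ib hib (le_max_right _ _)
  exact connIn_trans hca (connIn_trans
    (q_conn hd R M hR hRM ia ib ε ε' hε hε') (connIn_symm hcb))

lemma box_finite {d : ℕ} (R : ℤ) : {y : Fin d → ℤ | ∀ i, |y i| ≤ R}.Finite := by
  apply Set.Finite.subset (Set.Finite.pi (fun _ : Fin d => Set.finite_Icc (-R) R))
  intro y hy
  exact fun i _ => Set.mem_Icc.mpr (abs_le.mp (hy i))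

lemma exists_bound {d : ℕ} (U : Set (Fin d → ℤ)) (hU : U.Finite) :
    ∃ R : ℤ, 0 ≤ R ∧ ∀ u ∈ U, ∀ i, |u i| ≤ R := by
  classical
  refine ⟨(hU.toFinset.sup fun u => Finset.univ.sup fun i => (u i).natAbs : ℕ), by positivity,
    fun u hu i => ?_⟩
  have hn : (u i).natAbs ≤ hU.toFinset.sup (fun u => Finset.univ.sup fun i => (u i).natAbs) :=
    le_trans (Finset.le_sup (f := fun i => (u i).natAbs) (Finset.mem_univ i))
      (Finset.le_sup (f := fun u => Finset.univ.sup fun i => (u i).natAbs)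
        (hU.mem_toFinset.mpr hu))
  rw [Int.abs_eq_natAbs]
  exact_mod_cast hn

lemma conn_of_infinite {d : ℕ} (hd : 2 ≤ d) (U : Set (Fin d → ℤ)) (hU : U.Finite)
    (a b : Fin d → ℤ) (ha : (connComp Uᶜ a).Infinite) (hb : (connComp Uᶜ b).Infinite) :
    ConnIn Uᶜ a b := by
  obtain ⟨R, hR0, hRb⟩ := exists_bound U hU
  have hsub : outSet R ⊆ (Uᶜ : Set (Fin d → ℤ)) := by
    intro y hy hyU
    obtain ⟨i, hi⟩ := hy
    exact absurd (hRb y hyU i) (not_le.mpr hi)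
  obtain ⟨a', ha'c, ha'o⟩ := ha.exists_notMem_finite (box_finite R)
  obtain ⟨b', hb'c, hb'o⟩ := hb.exists_notMem_finite (box_finite R)
  have ha'out : a' ∈ outSet R := by
    by_contra h
    exact ha'o fun i => le_of_not_gt fun hlt => h ⟨i, hlt⟩
  have hb'out : b' ∈ outSet R := by
    by_contra h
    exact hb'o fun i => le_of_not_gt fun hlt => h ⟨i, hlt⟩
  have hmid : ConnIn Uᶜ a' b' :=
    connIn_mono hsub (out_conn hd R hR0 a' b' ha'out hb'out)
  exact connIn_trans ha'c (connIn_trans hmid (connIn_symm hb'c))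


/-- For a finite `U ⊆ ℤ^d` (`d ≥ 2`), the exterior boundary of `U` — the inner vertex
boundary of the (unique) infinite connected component `C` of `Uᶜ` — equals the outer
boundary of `fill U`, the union of `U` with all finite components of `Uᶜ`. -/
theorem extBd_eq_outerBd_fill {d : ℕ} (hd : 2 ≤ d) (U : Set (Fin d → ℤ)) (hUfin : U.Finite)
    (C : Set (Fin d → ℤ)) (x : Fin d → ℤ) (hx : x ∉ U)
    (hC : C = connComp Uᶜ x) (hCinf : C.Infinite) :
    innerBd C = outerBd (fill U) := by
  subst hC
  have key : connComp Uᶜ x = (fill U)ᶜ := by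
    ext z
    constructor
    · intro hz
      have hzU : z ∈ (Uᶜ : Set (Fin d → ℤ)) := (connIn_mem hz).2
      have hcc : connComp Uᶜ z = connComp Uᶜ x := connComp_eq_of_connIn hz
      intro hcontra
      rcases hcontra with h | ⟨_, h2⟩
      · exact hzU h
      · rw [hcc] at h2
        exact hCinf h2
    · intro hz
      have hzU : z ∉ U := fun h => hz (Or.inl h)
      have hzinf : (connComp Uᶜ z).Infinite := by
        by_contra hfin
        rw [Set.not_infinite] at hfin
        exact hz (Or.inr ⟨hzU, hfin⟩)
      exact connIn_symm (conn_of_infinite hd U hUfin z x hzinf hCinf)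
  rw [key]
  ext z
  simp only [innerBd, outerBd, Set.mem_setOf_eq, Set.mem_compl_iff, not_not]
end

section
/- If U is a finite connected subset of Z^d, then Fill(U), the union of U with all finite connected components of U^c, is also connected. The same holds with *-connectedness in place of connectedness. -/
open scoped BigOperators

section Aux

variable {α : Type*}

/-- Generic path-connectivity with adjacency relation `A` inside `S`. -/
def GConn (A : α → α → Prop) (S : Set α) (x y : α) : Prop :=
  ∃ (γ : ℕ → α) (k : ℕ),
    ((∀ i ≤ k, γ i ∈ S) ∧ ∀ i < k, A (γ i) (γ (i + 1))) ∧ γ 0 = x ∧ γ k = y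

lemma gconn_refl {A : α → α → Prop} {S : Set α} {x : α} (hx : x ∈ S) : GConn A S x x :=
  ⟨fun _ => x, 0, ⟨fun _ _ => hx, fun i hi => absurd hi (Nat.not_lt_zero i)⟩, rfl, rfl⟩

lemma gconn_mono {A : α → α → Prop} {S T : Set α} (hST : S ⊆ T) {x y : α}
    (h : GConn A S x y) : GConn A T x y := by
  obtain ⟨γ, k, ⟨hmem, hadj⟩, h0, hk⟩ := h
  exact ⟨γ, k, ⟨fun i hi => hST (hmem i hi), hadj⟩, h0, hk⟩

lemma gconn_mono_adj {A B : α → α → Prop} (hAB : ∀ a b, A a b → B a b) {S : Set α} {x y : α}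
    (h : GConn A S x y) : GConn B S x y := by
  obtain ⟨γ, k, ⟨hmem, hadj⟩, h0, hk⟩ := h
  exact ⟨γ, k, ⟨hmem, fun i hi => hAB _ _ (hadj i hi)⟩, h0, hk⟩

lemma gconn_trans {A : α → α → Prop} {S : Set α} {x y z : α}
    (h1 : GConn A S x y) (h2 : GConn A S y z) : GConn A S x z := by
  obtain ⟨γ₁, k₁, ⟨hmem₁, hadj₁⟩, h01, hk1⟩ := h1
  obtain ⟨γ₂, k₂, ⟨hmem₂, hadj₂⟩, h02, hk2⟩ := h2
  refine ⟨fun i => if i ≤ k₁ then γ₁ i else γ₂ (i - k₁), k₁ + k₂, ⟨?_, ?_⟩, ?_, ?_⟩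
  · intro i hi
    by_cases h : i ≤ k₁
    · simpa [h] using hmem₁ i h
    · simp only [h, if_false]
      exact hmem₂ (i - k₁) (by omega)
  · intro i hi
    by_cases h : i < k₁
    · have h1' : i ≤ k₁ := h.le
      have h2' : i + 1 ≤ k₁ := h
      simpa [h1', h2'] using hadj₁ i h
    · have h0 : k₁ ≤ i := not_lt.mp h
      have h1 : ¬ (i + 1 ≤ k₁) := by omega
      have hk : i - k₁ < k₂ := by omega
      have harr : i + 1 - k₁ = (i - k₁) + 1 := by omega
      have hval : (if i ≤ k₁ then γ₁ i else γ₂ (i - k₁)) = γ₂ (i - k₁) := by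
        by_cases h' : i ≤ k₁
        · have hik : i = k₁ := le_antisymm h' h0
          simp [hik, hk1, h02]
        · rw [if_neg h']
      show A (if i ≤ k₁ then γ₁ i else γ₂ (i - k₁))
        (if i + 1 ≤ k₁ then γ₁ (i + 1) else γ₂ (i + 1 - k₁))
      rw [hval, if_neg h1, harr]
      exact hadj₂ (i - k₁) hk
  · simp [h01]
  · by_cases h : k₂ = 0
    · subst h; simpa using hk1.trans (h02.symm.trans hk2)
    · have : ¬ (k₁ + k₂ ≤ k₁) := by omega
      simp only [this, if_false]
      simpa using hk2

lemma gconn_symm {A : α → α → Prop} (hA : ∀ a b, A a b → A b a) {S : Set α} {x y : α}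
    (h : GConn A S x y) : GConn A S y x := by
  obtain ⟨γ, k, ⟨hmem, hadj⟩, h0, hk⟩ := h
  refine ⟨fun i => γ (k - i), k, ⟨fun i hi => hmem _ (by omega), ?_⟩, by simpa using hk,
    by simpa using h0⟩
  intro i hi
  have h1 : k - i = (k - (i + 1)) + 1 := by omega
  show A (γ (k - i)) (γ (k - (i + 1)))
  rw [h1]
  exact hA _ _ (hadj _ (by omega))

end Aux

lemma latAdjStar_symm {d : ℕ} {x y : Fin d → ℤ} (h : latAdjStar x y) : latAdjStar y x := by
  obtain ⟨hne, hle⟩ := h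
  exact ⟨fun h' => hne h'.symm, fun i => by simpa [abs_sub_comm] using hle i⟩

lemma latAdj_to_star {d : ℕ} {x y : Fin d → ℤ} (h : latAdj x y) : latAdjStar x y := by
  unfold latAdj at h
  constructor
  · intro he
    subst he
    simp at h
  · intro i
    have hle : |x i - y i| ≤ ∑ j : Fin d, |x j - y j| :=
      Finset.single_le_sum (f := fun j => |x j - y j|) (fun j _ => abs_nonneg _)
        (Finset.mem_univ i)
    exact hle.trans_eq h

lemma connIn_eq_gconn {d : ℕ} (S : Set (Fin d → ℤ)) (x y : Fin d → ℤ) :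
    ConnIn S x y ↔ GConn latAdj S x y := Iff.rfl

lemma starConnIn_eq_gconn {d : ℕ} (S : Set (Fin d → ℤ)) (x y : Fin d → ℤ) :
    StarConnIn S x y ↔ GConn latAdjStar S x y := Iff.rfl

/-- From a point of `fill U \ U`, a nearest-neighbor path inside `fill U` reaches `U`. -/
lemma fill_reach {d : ℕ} (hd : 0 < d) (U : Set (Fin d → ℤ))
    {x : Fin d → ℤ} (hx : x ∉ U) (hxc : (connComp Uᶜ x).Finite) :
    ∃ a ∈ U, GConn latAdj (fill U) x a := by
  classical
  set i0 : Fin d := ⟨0, hd⟩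
  set γ : ℕ → Fin d → ℤ := fun n j => x j + (n : ℤ) * (if j = i0 then 1 else 0) with hγ
  have hadj : ∀ n : ℕ, latAdj (γ n) (γ (n + 1)) := by
    intro n
    unfold latAdj
    have : ∀ j : Fin d, |γ n j - γ (n+1) j| = if j = i0 then 1 else 0 := by
      intro j
      by_cases h : j = i0 <;> simp [hγ, h]
    rw [Finset.sum_congr rfl (fun j _ => this j)]
    simp
  -- prefix path stays in Uᶜ gives membership in the component of x
  have hprefix : ∀ n : ℕ, (∀ i ≤ n, γ i ∉ U) → ConnIn Uᶜ x (γ n) := by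
    intro n hn
    refine ⟨γ, n, ⟨fun i hi => hn i hi, fun i _ => hadj i⟩, ?_, rfl⟩
    funext j; simp [hγ]
  -- the straight line must hit U
  have hhit : ∃ n, γ n ∈ U := by
    by_contra hno
    push_neg at hno
    have hmem : ∀ n, γ n ∈ connComp Uᶜ x := fun n => hprefix n (fun i _ => hno i)
    have hinj : Function.Injective γ := by
      intro a b hab
      have := congrFun hab i0
      simp [hγ] at this
      omega
    exact (Set.infinite_of_injective_forall_mem hinj hmem) hxc
  set n := Nat.find hhit with hndef
  have hn : γ n ∈ U := Nat.find_spec hhit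
  have hnmin : ∀ m < n, γ m ∉ U := fun m hm => Nat.find_min hhit hm
  refine ⟨γ n, hn, γ, n, ⟨?_, fun i _ => hadj i⟩, ?_, rfl⟩
  · intro i hi
    rcases eq_or_lt_of_le hi with rfl | hilt
    · exact Or.inl hn
    · -- γ i ∉ U, and its component is finite
      have hiU : γ i ∉ U := hnmin i hilt
      have hconn : ConnIn Uᶜ x (γ i) := hprefix i (fun j hj => hnmin j (lt_of_le_of_lt hj hilt))
      refine Or.inr ⟨hiU, ?_⟩
      refine Set.Finite.subset hxc ?_
      intro z hz
      exact gconn_trans hconn hz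
  · funext j; simp [hγ]

/-- Every point of `fill U` is joined within `fill U` to a point of `U`. -/
lemma fill_to_U {d : ℕ} (hd : 0 < d) (U : Set (Fin d → ℤ))
    {x : Fin d → ℤ} (hx : x ∈ fill U) :
    ∃ a ∈ U, GConn latAdj (fill U) x a := by
  rcases hx with hx | ⟨hxU, hxc⟩
  · exact ⟨x, hx, gconn_refl (Or.inl hx)⟩
  · exact fill_reach hd U hxU hxc

/-- If `U ⊆ ℤ^d` is finite and connected, then `fill U` (the union of `U` with all finite
connected components of `Uᶜ`) is connected; the same holds for `*`-connectedness. -/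
theorem fill_connected_and_starConnected {d : ℕ} (U : Set (Fin d → ℤ)) (hUfin : U.Finite) :
    (ConnectedSet U → ConnectedSet (fill U)) ∧
    (StarConnectedSet U → StarConnectedSet (fill U)) := by
  rcases Nat.eq_zero_or_pos d with rfl | hd
  · -- `Fin 0 → ℤ` is a subsingleton; every set is (star-)connected.
    have hsub : ∀ x y : Fin 0 → ℤ, x = y := fun x y => funext fun i => i.elim0
    constructor
    · intro _ x hx y hy
      rw [hsub x y] at hx ⊢
      exact gconn_refl hy
    · intro _ x hx y hy
      rw [hsub x y] at hx ⊢
      exact gconn_refl hy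
  · constructor
    · intro hU x hx y hy
      obtain ⟨a, haU, hxa⟩ := fill_to_U hd U hx
      obtain ⟨b, hbU, hyb⟩ := fill_to_U hd U hy
      have hab : GConn latAdj (fill U) a b :=
        gconn_mono (Set.subset_union_left) (hU a haU b hbU)
      exact gconn_trans hxa (gconn_trans hab (gconn_symm (fun _ _ => latAdj_symm) hyb))
    · intro hU x hx y hy
      obtain ⟨a, haU, hxa⟩ := fill_to_U hd U hx
      obtain ⟨b, hbU, hyb⟩ := fill_to_U hd U hy
      have hxa' : GConn latAdjStar (fill U) x a :=
        gconn_mono_adj (fun _ _ => latAdj_to_star) hxa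
      have hyb' : GConn latAdjStar (fill U) y b :=
        gconn_mono_adj (fun _ _ => latAdj_to_star) hyb
      have hab : GConn latAdjStar (fill U) a b :=
        gconn_mono (Set.subset_union_left) (hU a haU b hbU)
      exact gconn_trans hxa' (gconn_trans hab (gconn_symm (fun _ _ => latAdjStar_symm) hyb'))
end

section
/- Let Σ be a finite subset of Z^d, let U be a *-connected component of Σ, and let W be a finite subset of Z^d which is either (i) connected, or (ii) a *-connected component of Σ. Assume that U ⪯ W and that the closure of U is connected to the closure of W within Z^d \ Σ. Then any point of U that is connected to W by a nearest-neighbor path whose interior avoids U is also connected to W by a nearest-neighbor path whose interior avoids Σ. -/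
open scoped BigOperators

/-- `U` is a `*`-connected component of `S`. -/
def IsStarComponent {d : ℕ} (U S : Set (Fin d → ℤ)) : Prop :=
  ∃ x ∈ S, U = starConnComp S x

/-- `x` is connected to the set `W` by a nearest-neighbor path whose interior avoids `A`. -/
def ConnAvoiding {d : ℕ} (A : Set (Fin d → ℤ)) (x : Fin d → ℤ) (W : Set (Fin d → ℤ)) :
    Prop :=
  ∃ (γ : ℕ → Fin d → ℤ) (k : ℕ), γ 0 = x ∧ γ k ∈ W ∧
    (∀ i < k, latAdj (γ i) (γ (i + 1))) ∧ ∀ i, 0 < i → i < k → γ i ∉ A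

/-!
Let `p` be the point following `x` on the given path: it lies on the outer boundary of the
`*`-component `U` and reaches `clo W` off `U`. The key fact is that two outer boundary points of
`U` joined off `U` are also joined off `Σ`. Indeed they are joined through `U`, that is off
`V = Σ \ U`; as `U` and `V` are `*`-separated, a path avoiding `U` and one avoiding `V` are
homotopic through unit squares none of which meets both, and the parity of the number of edges
between `V` and the component of `p` in `(U ∪ V)ᶜ` is invariant under such homotopies.

Suppose the component of `p` in `Σᶜ` missed `clo W`. Then every point of `clo W` is reached from
`p` off `U`: if `W` is connected, a path inside `clo W` could only run into `U` after an outer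
boundary point of `U` in `clo W`, which the key fact would put into that component; if `W` is
another `*`-component, `clo W` is connected off `U` outright. The connection of `clo U` to
`clo W` within `Σᶜ` then starts at an outer boundary point of `U` reached from `p` off `U`, hence
off `Σ`, which is absurd.
-/

open Relation

section Chains

variable {α : Type*} (r : α → α → Prop) (S : Set α)

theorem exists_chain_iff_reflTransGen {x y : α} :
    (∃ (γ : ℕ → α) (k : ℕ), ((∀ i ≤ k, γ i ∈ S) ∧ ∀ i < k, r (γ i) (γ (i + 1))) ∧
        γ 0 = x ∧ γ k = y) ↔
      x ∈ S ∧ ReflTransGen (fun a b => r a b ∧ b ∈ S) x y := by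
  constructor
  · rintro ⟨γ, k, ⟨hmem, hr⟩, rfl, rfl⟩
    refine ⟨hmem 0 k.zero_le, ?_⟩
    induction k with
    | zero => exact .refl
    | succ k ih =>
      exact .tail (ih (fun i hi => hmem i (by omega)) (fun i hi => hr i (by omega)))
        ⟨hr k k.lt_succ_self, hmem _ le_rfl⟩
  · rintro ⟨hx, h⟩
    induction h with
    | refl =>
      exact ⟨fun _ => x, 0, ⟨fun _ _ => hx, fun _ h => absurd h (Nat.not_lt_zero _)⟩, rfl, rfl⟩
    | @tail b c _ hbc ih =>
      obtain ⟨γ, k, ⟨hmem, hr⟩, h0, rfl⟩ := ih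
      refine ⟨fun i => if i ≤ k then γ i else c, k + 1, ⟨fun i hi => ?_, fun i hi => ?_⟩, ?_, ?_⟩
      · dsimp only
        split_ifs with h
        exacts [hmem i h, hbc.2]
      · rcases Nat.lt_succ_iff_lt_or_eq.1 hi with hi | rfl
        · simpa [hi.le, Nat.succ_le_of_lt hi] using hr i hi
        · simpa using hbc.1
      · simpa using h0
      · simp

variable {r S} {x y : α}

theorem Relation.ReflTransGen.mem_of_restrict (hx : x ∈ S)
    (h : ReflTransGen (fun a b => r a b ∧ b ∈ S) x y) : y ∈ S := by
  rcases h.cases_tail with rfl | ⟨_, _, hy⟩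
  exacts [hx, hy.2]

theorem Relation.ReflTransGen.restrict_symm (hr : ∀ a b, r a b → r b a) (hx : x ∈ S)
    (h : ReflTransGen (fun a b => r a b ∧ b ∈ S) x y) :
    ReflTransGen (fun a b => r a b ∧ b ∈ S) y x := by
  induction h with
  | refl => exact .refl
  | tail hxb hbc ih => exact .head ⟨hr _ _ hbc.1, hxb.mem_of_restrict hx⟩ ih

end Chains

section

variable {d : ℕ} {S T : Set (Fin d → ℤ)} {x y z : Fin d → ℤ}

theorem latAdj_comm : latAdj x y ↔ latAdj y x := by
  simp only [latAdj, abs_sub_comm]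

theorem latAdj.symm (h : latAdj x y) : latAdj y x := latAdj_comm.1 h

theorem latAdj.abs_sub_le_one (h : latAdj x y) (i : Fin d) : |x i - y i| ≤ 1 :=
  h ▸ Finset.single_le_sum (fun j _ => abs_nonneg (x j - y j)) (Finset.mem_univ i)

theorem latAdj.latAdjStar (h : latAdj x y) : latAdjStar x y :=
  ⟨by rintro rfl; simp [latAdj] at h, h.abs_sub_le_one⟩

theorem latAdjStar.symm (h : latAdjStar x y) : latAdjStar y x :=
  ⟨h.1.symm, fun i => abs_sub_comm (y i) (x i) ▸ h.2 i⟩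

theorem connIn_iff : ConnIn S x y ↔ x ∈ S ∧ ReflTransGen (fun a b => latAdj a b ∧ b ∈ S) x y :=
  exists_chain_iff_reflTransGen latAdj S

theorem starConnIn_iff :
    StarConnIn S x y ↔ x ∈ S ∧ ReflTransGen (fun a b => latAdjStar a b ∧ b ∈ S) x y :=
  exists_chain_iff_reflTransGen latAdjStar S

namespace ConnIn

theorem refl (hx : x ∈ S) : ConnIn S x x := connIn_iff.2 ⟨hx, .refl⟩

theorem of_latAdj (hx : x ∈ S) (hy : y ∈ S) (h : latAdj x y) : ConnIn S x y :=
  connIn_iff.2 ⟨hx, .single ⟨h, hy⟩⟩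

theorem mem_left (h : ConnIn S x y) : x ∈ S := (connIn_iff.1 h).1

theorem mem_right (h : ConnIn S x y) : y ∈ S :=
  (connIn_iff.1 h).2.mem_of_restrict h.mem_left

theorem trans (h₁ : ConnIn S x y) (h₂ : ConnIn S y z) : ConnIn S x z :=
  connIn_iff.2 ⟨h₁.mem_left, (connIn_iff.1 h₁).2.trans (connIn_iff.1 h₂).2⟩

theorem symm (h : ConnIn S x y) : ConnIn S y x :=
  connIn_iff.2 ⟨h.mem_right, (connIn_iff.1 h).2.restrict_symm (fun _ _ => latAdj.symm) h.mem_left⟩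

theorem mono (hST : S ⊆ T) (h : ConnIn S x y) : ConnIn T x y :=
  connIn_iff.2 ⟨hST h.mem_left,
    ReflTransGen.mono (fun _ _ hab => ⟨hab.1, hST hab.2⟩) _ _ (connIn_iff.1 h).2⟩

end ConnIn

namespace StarConnIn

theorem of_latAdjStar (hx : x ∈ S) (hy : y ∈ S) (h : latAdjStar x y) : StarConnIn S x y :=
  starConnIn_iff.2 ⟨hx, .single ⟨h, hy⟩⟩

theorem mem_right (h : StarConnIn S x y) : y ∈ S :=
  (starConnIn_iff.1 h).2.mem_of_restrict (starConnIn_iff.1 h).1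

theorem trans (h₁ : StarConnIn S x y) (h₂ : StarConnIn S y z) : StarConnIn S x z :=
  starConnIn_iff.2 ⟨(starConnIn_iff.1 h₁).1, (starConnIn_iff.1 h₁).2.trans (starConnIn_iff.1 h₂).2⟩

theorem symm (h : StarConnIn S x y) : StarConnIn S y x :=
  starConnIn_iff.2 ⟨h.mem_right,
    (starConnIn_iff.1 h).2.restrict_symm (fun _ _ => latAdjStar.symm) (starConnIn_iff.1 h).1⟩

end StarConnIn

def boolSign (b : Bool) : ℤ := if b then 1 else -1

/-- An axis and a direction, `true` being the positive one. -/
abbrev UnitStep (d : ℕ) := Fin d × Bool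

namespace UnitStep

def vec (s : UnitStep d) : Fin d → ℤ := Pi.single s.1 (boolSign s.2)

def rev (s : UnitStep d) : UnitStep d := (s.1, !s.2)

theorem vec_rev (s : UnitStep d) : s.rev.vec = -s.vec := by
  obtain ⟨i, b⟩ := s
  cases b <;> simp [vec, rev, boolSign, Pi.single_neg]

theorem abs_vec_le_one (s : UnitStep d) (i : Fin d) : |s.vec i| ≤ 1 := by
  obtain ⟨j, b⟩ := s
  by_cases hi : i = j <;> cases b <;> simp [vec, boolSign, hi]

end UnitStep

variable {w w' : List (UnitStep d)}

theorem latAdj_add_vec (x : Fin d → ℤ) (s : UnitStep d) : latAdj x (x + s.vec) := by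
  obtain ⟨j, b⟩ := s
  cases b <;> simp [latAdj, UnitStep.vec, boolSign, Pi.single_apply, apply_ite]

theorem latAdj_iff_exists_step : latAdj x y ↔ ∃ s : UnitStep d, y = x + s.vec := by
  refine ⟨fun h => ?_, fun ⟨s, hs⟩ => hs ▸ latAdj_add_vec x s⟩
  obtain ⟨j, hj⟩ : ∃ j, x j ≠ y j := by
    by_contra! hxy
    simp [latAdj, hxy] at h
  have hsum := Finset.add_sum_erase Finset.univ (fun i => |x i - y i|) (Finset.mem_univ j)
  have hj1 : |x j - y j| = 1 := by
    have := Finset.sum_nonneg fun i (_ : i ∈ Finset.univ.erase j) => abs_nonneg (x i - y i)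
    have := abs_pos.2 (sub_ne_zero.2 hj)
    simp only [latAdj] at h
    omega
  have hrest : ∀ i ≠ j, x i = y i := fun i hi => by
    have hzero := (Finset.sum_eq_zero_iff_of_nonneg fun i _ => abs_nonneg (x i - y i)).1
      (by simp only [latAdj] at h; omega) i (Finset.mem_erase.2 ⟨hi, Finset.mem_univ i⟩)
    simpa [sub_eq_zero] using hzero
  refine ⟨(j, decide (x j < y j)), funext fun i => ?_⟩
  by_cases hi : i = j
  · subst hi
    rcases (abs_eq zero_le_one).1 hj1 with h' | h' <;>
      simp [UnitStep.vec, boolSign] <;> omega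
  · simp [UnitStep.vec, hi, hrest i hi]

def disp (w : List (UnitStep d)) : Fin d → ℤ := (w.map UnitStep.vec).sum

def WalkIn (S : Set (Fin d → ℤ)) : (Fin d → ℤ) → List (UnitStep d) → Prop
  | x, [] => x ∈ S
  | x, s :: w => x ∈ S ∧ WalkIn S (x + s.vec) w

theorem WalkIn.mem (h : WalkIn S x w) : x ∈ S := by
  cases w
  exacts [h, h.1]

theorem ConnIn.exists_walkIn (h : ConnIn S x y) : ∃ w, WalkIn S x w ∧ x + disp w = y := by
  rw [connIn_iff] at h
  obtain ⟨hx, h⟩ := h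
  induction h using ReflTransGen.head_induction_on with
  | refl => exact ⟨[], hx, by simp [disp]⟩
  | head hac _ ih =>
    obtain ⟨s, rfl⟩ := latAdj_iff_exists_step.1 hac.1
    obtain ⟨w, hw, rfl⟩ := ih hac.2
    exact ⟨s :: w, ⟨hx, hw⟩, by simp [disp, add_assoc]⟩

inductive Move : List (UnitStep d) → List (UnitStep d) → Prop
  | swap (pre post : List (UnitStep d)) {s t : UnitStep d} (h : s.1 ≠ t.1) :
      Move (pre ++ s :: t :: post) (pre ++ t :: s :: post)
  | cancel (pre post : List (UnitStep d)) (s : UnitStep d) :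
      Move (pre ++ s :: s.rev :: post) (pre ++ post)

def Homotopic (w w' : List (UnitStep d)) : Prop := EqvGen Move w w'

theorem Move.append (pre post : List (UnitStep d)) (h : Move w w') :
    Move (pre ++ w ++ post) (pre ++ w' ++ post) := by
  cases h with
  | swap l r h => simpa using Move.swap (pre ++ l) (r ++ post) h
  | cancel l r s => simpa using Move.cancel (pre ++ l) (r ++ post) s

namespace Homotopic

theorem of_move (h : Move w w') : Homotopic w w' := EqvGen.rel _ _ h

theorem refl (w : List (UnitStep d)) : Homotopic w w := EqvGen.refl w

theorem symm (h : Homotopic w w') : Homotopic w' w := EqvGen.symm _ _ h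

theorem trans {w'' : List (UnitStep d)} (h : Homotopic w w') (h' : Homotopic w' w'') :
    Homotopic w w'' :=
  EqvGen.trans _ _ _ h h'

theorem append (pre post : List (UnitStep d)) (h : Homotopic w w') :
    Homotopic (pre ++ w ++ post) (pre ++ w' ++ post) := by
  induction h with
  | rel _ _ h => exact of_move (h.append pre post)
  | refl => exact refl _
  | symm _ _ _ ih => exact ih.symm
  | trans _ _ _ _ _ ih ih' => exact ih.trans ih'

theorem cons (s : UnitStep d) (h : Homotopic w w') : Homotopic (s :: w) (s :: w') := by
  simpa using h.append [s] []

end Homotopic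

theorem homotopic_cons_append {s : UnitStep d} {l : List (UnitStep d)} (hl : ∀ t ∈ l, s.1 ≠ t.1)
    (r : List (UnitStep d)) : Homotopic (s :: (l ++ r)) (l ++ s :: r) := by
  induction l with
  | nil => exact .refl _
  | cons t l ih =>
    have hswap : Move (s :: t :: (l ++ r)) (t :: s :: (l ++ r)) := by
      simpa using Move.swap [] (l ++ r) (hl t List.mem_cons_self)
    exact (Homotopic.of_move hswap).trans
      ((ih fun u hu => hl u (List.mem_cons_of_mem t hu)).cons t)

def block (i : Fin d) (n : ℤ) : List (UnitStep d) := List.replicate n.natAbs (i, decide (0 < n))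

theorem block_add_eq_cons (i : Fin d) (b : Bool) {n : ℤ} (h : 0 ≤ n * boolSign b) :
    block i (n + boolSign b) = (i, b) :: block i n := by
  have habs : (n + boolSign b).natAbs = n.natAbs + 1 := by
    cases b <;> simp [boolSign] at * <;> omega
  rw [block, block, habs, List.replicate_succ]
  rcases eq_or_ne n 0 with rfl | hn
  · cases b <;> simp [boolSign]
  · have hdir : decide (0 < n + boolSign b) = b ∧ decide (0 < n) = b := by
      cases b <;> simp [boolSign] at * <;> omega
    rw [hdir.1, hdir.2]

theorem homotopic_cons_block (i : Fin d) (b : Bool) (n : ℤ) :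
    Homotopic ((i, b) :: block i n) (block i (n + boolSign b)) := by
  rcases le_or_gt 0 (n * boolSign b) with h | h
  · rw [block_add_eq_cons i b h]
    exact .refl _
  · have h' : 0 ≤ (n + boolSign b) * boolSign (!b) := by
      cases b <;> simp [boolSign] at * <;> omega
    have hn := block_add_eq_cons i (!b) h'
    rw [show n + boolSign b + boolSign (!b) = n by cases b <;> simp [boolSign]] at hn
    rw [hn]
    exact .of_move (by simpa [UnitStep.rev] using Move.cancel [] (block i (n + boolSign b)) (i, b))

def canon (δ : Fin d → ℤ) : List (UnitStep d) :=
  (List.finRange d).flatMap fun i => block i (δ i)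

theorem homotopic_cons_canon (s : UnitStep d) (δ : Fin d → ℤ) :
    Homotopic (s :: canon δ) (canon (s.vec + δ)) := by
  obtain ⟨i, b⟩ := s
  obtain ⟨P, Q, hPQ⟩ := List.append_of_mem (List.mem_finRange i)
  have hi : i ∉ P ++ Q := (List.nodup_cons.1 (List.nodup_middle.1 (hPQ ▸ List.nodup_finRange d))).1
  have hδ : ∀ j ∈ P ++ Q, (UnitStep.vec (i, b) + δ) j = δ j := fun j hj => by
    simp [UnitStep.vec, show j ≠ i by rintro rfl; exact hi hj]
  have hcanon : ∀ δ', canon δ' = P.flatMap (fun j => block j (δ' j)) ++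
      (block i (δ' i) ++ Q.flatMap fun j => block j (δ' j)) := fun δ' => by
    simp [canon, hPQ]
  have haxes : ∀ t ∈ P.flatMap (fun j => block j (δ j)), i ≠ t.1 := by
    simp only [List.mem_flatMap, block]
    rintro t ⟨j, hj, ht⟩ rfl
    rw [List.eq_of_mem_replicate ht] at hi
    exact hi (List.mem_append_left Q hj)
  have hP : P.flatMap (fun j => block j ((UnitStep.vec (i, b) + δ) j)) =
      P.flatMap (fun j => block j (δ j)) :=
    List.flatMap_congr fun j hj => by rw [hδ j (List.mem_append_left Q hj)]
  have hQ : Q.flatMap (fun j => block j ((UnitStep.vec (i, b) + δ) j)) =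
      Q.flatMap (fun j => block j (δ j)) :=
    List.flatMap_congr fun j hj => by rw [hδ j (List.mem_append_right P hj)]
  have hδi : (UnitStep.vec (i, b) + δ) i = δ i + boolSign b := by simp [UnitStep.vec, add_comm]
  rw [hcanon δ, hcanon (UnitStep.vec (i, b) + δ), hP, hQ, hδi]
  exact (homotopic_cons_append haxes _).trans (by
    simpa using (homotopic_cons_block i b (δ i)).append (P.flatMap fun j => block j (δ j))
      (Q.flatMap fun j => block j (δ j)))

theorem homotopic_canon_disp (w : List (UnitStep d)) : Homotopic w (canon (disp w)) := by
  induction w with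
  | nil =>
    convert Homotopic.refl ([] : List (UnitStep d))
    simp [disp, canon, block]
  | cons s w ih => simpa [disp] using (ih.cons s).trans (homotopic_cons_canon s (disp w))

theorem homotopic_of_disp_eq (h : disp w = disp w') : Homotopic w w' :=
  (homotopic_canon_disp w).trans (h ▸ (homotopic_canon_disp w').symm)

def StarSeparated (U V : Set (Fin d → ℤ)) : Prop :=
  ∀ u ∈ U, ∀ v ∈ V, ¬ ∀ i, |u i - v i| ≤ 1

theorem abs_sub_le_one_of_mem_square {s t : UnitStep d} (hst : s.1 ≠ t.1) (y : Fin d → ℤ) :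
    ∀ a ∈ ({y, y + s.vec, y + t.vec, y + s.vec + t.vec} : Set (Fin d → ℤ)),
    ∀ b ∈ ({y, y + s.vec, y + t.vec, y + s.vec + t.vec} : Set (Fin d → ℤ)),
    ∀ i, |a i - b i| ≤ 1 := by
  intro a ha b hb i
  have hzero : s.vec i = 0 ∨ t.vec i = 0 := by
    by_cases hi : i = s.1
    · exact .inr (Pi.single_eq_of_ne (hi ▸ hst) _)
    · exact .inl (Pi.single_eq_of_ne hi _)
  have hδ : |s.vec i + t.vec i| ≤ 1 := by
    rcases hzero with h | h <;> simp [h, UnitStep.abs_vec_le_one]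
  have hcorner : ∀ c ∈ ({y, y + s.vec, y + t.vec, y + s.vec + t.vec} : Set (Fin d → ℤ)),
      c i = y i ∨ c i = y i + (s.vec i + t.vec i) := by
    rintro c (rfl | rfl | rfl | rfl) <;> rcases hzero with h | h <;> simp [h]
  rcases hcorner a ha with ha' | ha' <;> rcases hcorner b hb with hb' | hb' <;> rw [ha', hb'] <;>
    simp only [sub_self, abs_zero, zero_le_one, add_sub_cancel_left, sub_add_cancel_left, abs_neg,
      hδ]

def IsComponentUnion (F S : Set (Fin d → ℤ)) : Prop :=
  F ⊆ S ∧ ∀ a ∈ F, ∀ b ∈ S, latAdj a b → b ∈ F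

theorem connComp_isComponentUnion (S : Set (Fin d → ℤ)) (p : Fin d → ℤ) :
    IsComponentUnion (connComp S p) S :=
  ⟨fun _ h => ConnIn.mem_right h,
    fun _ ha _ hb hab => ConnIn.trans ha (.of_latAdj ha.mem_right hb hab)⟩

section Crossings

variable (F V : Set (Fin d → ℤ))

noncomputable def crossing (a b : Fin d → ℤ) : ZMod 2 :=
  F.indicator 1 a * V.indicator 1 b + V.indicator 1 a * F.indicator 1 b

noncomputable def crossings : (Fin d → ℤ) → List (UnitStep d) → ZMod 2
  | _, [] => 0
  | x, s :: w => crossing F V x (x + s.vec) + crossings (x + s.vec) w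

variable {F V} {U : Set (Fin d → ℤ)} {a b : Fin d → ℤ}

theorem crossing_comm (a b : Fin d → ℤ) : crossing F V a b = crossing F V b a := by
  unfold crossing; ring

theorem crossing_of_notMem (ha : a ∉ V) (hb : b ∉ V) : crossing F V a b = 0 := by
  simp [crossing, ha, hb]

theorem crossings_append (x : Fin d → ℤ) (w w' : List (UnitStep d)) :
    crossings F V x (w ++ w') = crossings F V x w + crossings F V (x + disp w) w' := by
  induction w generalizing x with
  | nil => simp [crossings, disp]
  | cons s w ih => simp [crossings, ih, disp, add_assoc]

theorem crossings_of_walkIn_compl (hw : WalkIn Vᶜ x w) : crossings F V x w = 0 := by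
  induction w generalizing x with
  | nil => rfl
  | cons s w ih => simp [crossings, ih hw.2, crossing_of_notMem hw.1 hw.2.mem]

/-- Away from `U`, an edge can only leave `F` towards `V`. -/
theorem crossing_eq_indicator_add (hF : IsComponentUnion F (U ∪ V)ᶜ) (hab : latAdj a b)
    (ha : a ∉ U) (hb : b ∉ U) : crossing F V a b = F.indicator 1 a + F.indicator 1 b := by
  have hFV : ∀ {c}, c ∈ F → c ∉ V := fun hc h => hF.1 hc (.inr h)
  have hV : ∀ {c e}, latAdj c e → e ∉ U → c ∈ F → e ∉ F → e ∈ V := fun hce he hc heF =>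
    by_contra fun heV => heF (hF.2 _ hc _ (by simp [he, heV]) hce)
  have h2 : (2 : ZMod 2) = 0 := rfl
  by_cases haF : a ∈ F <;> by_cases hbF : b ∈ F
  · simp only [crossing, Pi.one_apply, Set.indicator_of_mem haF, Set.indicator_of_mem hbF,
      Set.indicator_of_notMem (hFV haF), Set.indicator_of_notMem (hFV hbF)]
    linear_combination -h2
  · simp only [crossing, Pi.one_apply, Set.indicator_of_mem haF, Set.indicator_of_notMem hbF,
      Set.indicator_of_mem (hV hab hb haF hbF), Set.indicator_of_notMem (hFV haF)]
    ring
  · simp only [crossing, Pi.one_apply, Set.indicator_of_notMem haF, Set.indicator_of_mem hbF,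
      Set.indicator_of_mem (hV hab.symm ha hbF haF), Set.indicator_of_notMem (hFV hbF)]
    ring
  · simp only [crossing, Set.indicator_of_notMem haF, Set.indicator_of_notMem hbF]
    ring

theorem crossings_eq_indicator_add (hF : IsComponentUnion F (U ∪ V)ᶜ) (hw : WalkIn Uᶜ x w) :
    crossings F V x w = F.indicator 1 x + F.indicator 1 (x + disp w) := by
  have h2 : (2 : ZMod 2) = 0 := rfl
  induction w generalizing x with
  | nil =>
    simp only [crossings, disp, List.map_nil, List.sum_nil, add_zero]
    linear_combination -F.indicator 1 x * h2
  | cons s w ih =>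
    simp only [crossings, ih hw.2, crossing_eq_indicator_add hF (latAdj_add_vec x s) hw.1 hw.2.mem,
      disp, List.map_cons, List.sum_cons, add_assoc]
    linear_combination F.indicator 1 (x + s.vec) * h2

theorem crossing_square (hF : IsComponentUnion F (U ∪ V)ᶜ) (hUV : StarSeparated U V)
    {c₀ c₁ c₂ c₃ : Fin d → ℤ}
    (hclose : ∀ a ∈ ({c₀, c₁, c₂, c₃} : Set (Fin d → ℤ)),
      ∀ b ∈ ({c₀, c₁, c₂, c₃} : Set (Fin d → ℤ)), ∀ i, |a i - b i| ≤ 1)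
    (h₀₁ : latAdj c₀ c₁) (h₁₃ : latAdj c₁ c₃) (h₀₂ : latAdj c₀ c₂) (h₂₃ : latAdj c₂ c₃) :
    crossing F V c₀ c₁ + crossing F V c₁ c₃ = crossing F V c₀ c₂ + crossing F V c₂ c₃ := by
  by_cases hV : ∀ v ∈ ({c₀, c₁, c₂, c₃} : Set (Fin d → ℤ)), v ∉ V
  · rw [crossing_of_notMem (hV c₀ (by simp)) (hV c₁ (by simp)),
      crossing_of_notMem (hV c₁ (by simp)) (hV c₃ (by simp)),
      crossing_of_notMem (hV c₀ (by simp)) (hV c₂ (by simp)),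
      crossing_of_notMem (hV c₂ (by simp)) (hV c₃ (by simp))]
  · obtain ⟨v, hv, hvV⟩ : ∃ v ∈ ({c₀, c₁, c₂, c₃} : Set (Fin d → ℤ)), v ∈ V := by
      by_contra! h
      exact hV h
    have hU : ∀ c ∈ ({c₀, c₁, c₂, c₃} : Set (Fin d → ℤ)), c ∉ U :=
      fun c hc hcU => hUV c hcU v hvV (hclose c hc v hv)
    have h2 : (2 : ZMod 2) = 0 := rfl
    rw [crossing_eq_indicator_add hF h₀₁ (hU _ (by simp)) (hU _ (by simp)),
      crossing_eq_indicator_add hF h₁₃ (hU _ (by simp)) (hU _ (by simp)),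
      crossing_eq_indicator_add hF h₀₂ (hU _ (by simp)) (hU _ (by simp)),
      crossing_eq_indicator_add hF h₂₃ (hU _ (by simp)) (hU _ (by simp))]
    linear_combination (F.indicator 1 c₁ - F.indicator 1 c₂) * h2

theorem crossings_move (hF : IsComponentUnion F (U ∪ V)ᶜ) (hUV : StarSeparated U V)
    (h : Move w w') (x : Fin d → ℤ) : crossings F V x w = crossings F V x w' := by
  have h2 : (2 : ZMod 2) = 0 := rfl
  cases h with
  | @swap pre post s t hst =>
    simp only [crossings_append, crossings, add_right_comm _ t.vec s.vec]
    have := crossing_square hF hUV (abs_sub_le_one_of_mem_square hst (x + disp pre))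
      (latAdj_add_vec _ s) (latAdj_add_vec _ t) (latAdj_add_vec _ t)
      (add_right_comm (x + disp pre) s.vec t.vec ▸ latAdj_add_vec _ s)
    linear_combination this
  | cancel pre post s =>
    simp only [crossings_append, crossings, UnitStep.vec_rev, add_neg_cancel_right,
      crossing_comm (x + disp pre + s.vec)]
    linear_combination crossing F V (x + disp pre) (x + disp pre + s.vec) * h2

theorem crossings_homotopic (hF : IsComponentUnion F (U ∪ V)ᶜ) (hUV : StarSeparated U V)
    (h : Homotopic w w') (x : Fin d → ℤ) : crossings F V x w = crossings F V x w' := by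
  induction h with
  | rel _ _ h => exact crossings_move hF hUV h x
  | refl => rfl
  | symm _ _ _ ih => exact ih.symm
  | trans _ _ _ _ _ ih ih' => exact ih.trans ih'

end Crossings

/-- A path avoiding `U` and one avoiding `V` would be homotopic, yet, if `q` were not in the
component `F` of `p` in `(U ∪ V)ᶜ`, they would cross between `F` and `V` with different
parities. -/
theorem ConnIn.compl_union {U V : Set (Fin d → ℤ)} {p q : Fin d → ℤ} (hUV : StarSeparated U V)
    (hU : ConnIn Uᶜ p q) (hV : ConnIn Vᶜ p q) : ConnIn (U ∪ V)ᶜ p q := by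
  by_contra hpq
  obtain ⟨w, hw, hwq⟩ := hU.exists_walkIn
  obtain ⟨w', hw', hw'q⟩ := hV.exists_walkIn
  have hF := connComp_isComponentUnion (U ∪ V)ᶜ p
  have hp : p ∈ connComp (U ∪ V)ᶜ p := ConnIn.refl (by simp [hU.mem_left, hV.mem_left])
  have hhom := crossings_homotopic hF hUV
    (homotopic_of_disp_eq (add_left_cancel (hwq.trans hw'q.symm))) p
  rw [crossings_eq_indicator_add hF hw, crossings_of_walkIn_compl hw', hwq, Set.indicator_of_mem hp,
    Set.indicator_of_notMem (show q ∉ connComp (U ∪ V)ᶜ p from hpq)] at hhom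
  simp at hhom

theorem latAdj_update_s6 (x : Fin d → ℤ) (j : Fin d) {c : ℤ} (h : |x j - c| = 1) :
    latAdj x (Function.update x j c) := by
  unfold latAdj
  rw [Finset.sum_eq_single j (fun i _ hij => by simp [Function.update_of_ne hij])
    (by simp)]
  simpa using h

theorem connIn_of_abs_sub_le_one {A : Set (Fin d → ℤ)} {a b : Fin d → ℤ}
    (hab : ∀ i, |a i - b i| ≤ 1) (hA : ∀ z, (∀ i, |z i - a i| ≤ 1) → z ∈ A) : ConnIn A a b := by
  classical
  have hflip : ∀ s : Finset (Fin d), ConnIn A a fun i => if i ∈ s then b i else a i := by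
    intro s
    induction s using Finset.induction_on with
    | empty => simpa using ConnIn.refl (hA a (by simp))
    | @insert j s hj ih =>
      have hupd : (fun i => if i ∈ insert j s then b i else a i) =
          Function.update (fun i => if i ∈ s then b i else a i) j (b j) := by
        ext i
        by_cases hi : i = j
        · subst hi; simp
        · simp [hi]
      rw [hupd]
      rcases eq_or_ne (a j) (b j) with hj' | hj'
      · rwa [← hj', show a j = (fun i => if i ∈ s then b i else a i) j by simp [hj],
          Function.update_eq_self]
      refine ih.trans (.of_latAdj ih.mem_right (hA _ fun i => ?_) (latAdj_update_s6 _ j ?_))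
      · by_cases hi : i = j
        · subst hi; simpa [abs_sub_comm] using hab i
        · by_cases his : i ∈ s <;> simp [Function.update_of_ne hi, his, abs_sub_comm, hab i]
      · simpa [hj] using le_antisymm (hab j) (Int.one_le_abs (sub_ne_zero.2 hj'))
  simpa using hflip Finset.univ

section StarComponents

variable {x₀ a b : Fin d → ℤ}

theorem starConnComp_subset : starConnComp S x₀ ⊆ S := fun _ h => StarConnIn.mem_right h

theorem starConnComp_eq_of_mem (h : a ∈ starConnComp S x₀) :
    starConnComp S a = starConnComp S x₀ :=
  Set.ext fun _ => ⟨fun hz => StarConnIn.trans h hz, fun hz => StarConnIn.trans h.symm hz⟩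

theorem mem_starConnComp_of_latAdjStar (ha : a ∈ starConnComp S x₀) (hb : b ∈ S)
    (hab : latAdjStar a b) : b ∈ starConnComp S x₀ :=
  StarConnIn.trans ha (.of_latAdjStar (StarConnIn.mem_right ha) hb hab)

theorem mem_starConnComp_of_abs_sub_le_one (ha : a ∈ starConnComp S x₀) (hb : b ∈ S)
    (hab : ∀ i, |a i - b i| ≤ 1) : b ∈ starConnComp S x₀ := by
  rcases eq_or_ne a b with rfl | hne
  exacts [ha, mem_starConnComp_of_latAdjStar ha hb ⟨hne, hab⟩]

theorem outerBd_starConnComp_subset : outerBd (starConnComp S x₀) ⊆ Sᶜ :=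
  fun _ ⟨hpC, _, ha, hpa⟩ hpS => hpC (mem_starConnComp_of_latAdjStar ha hpS hpa.symm.latAdjStar)

theorem starSeparated_starConnComp_diff :
    StarSeparated (starConnComp S x₀) (S \ starConnComp S x₀) :=
  fun _ hu _ hv huv => hv.2 (mem_starConnComp_of_abs_sub_le_one hu hv.1 huv)

theorem ConnIn.of_mem_starConnComp (hT : Sᶜ ∪ starConnComp S x₀ ⊆ T)
    (ha : a ∈ starConnComp S x₀) (hb : b ∈ starConnComp S x₀) : ConnIn T a b := by
  have hstep : ∀ c ∈ starConnComp S x₀, ∀ e, latAdjStar c e → ConnIn T c e :=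
    fun c hc e hce => connIn_of_abs_sub_le_one hce.2 fun z hz => by
      by_cases hzS : z ∈ S
      · exact hT (.inr (mem_starConnComp_of_abs_sub_le_one hc hzS
          fun i => abs_sub_comm (z i) (c i) ▸ hz i))
      · exact hT (.inl hzS)
  obtain ⟨haS, hab⟩ := starConnIn_iff.1 (StarConnIn.trans (StarConnIn.symm ha) hb)
  clear hb
  induction hab with
  | refl => exact .refl (hT (.inr ha))
  | @tail c e hac hce ih =>
    have hc : c ∈ starConnComp S x₀ := StarConnIn.trans ha (starConnIn_iff.2 ⟨haS, hac⟩)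
    exact ih.trans (hstep c hc e hce.1)

/-- Going around through `C` itself avoids `S \ C`, which is `*`-separated from `C`. -/
theorem ConnIn.compl_of_mem_outerBd {p q : Fin d → ℤ} (hp : p ∈ outerBd (starConnComp S x₀))
    (hq : q ∈ outerBd (starConnComp S x₀)) (hpq : ConnIn (starConnComp S x₀)ᶜ p q) :
    ConnIn Sᶜ p q := by
  obtain ⟨-, a, ha, hpa⟩ := id hp
  obtain ⟨-, b, hb, hqb⟩ := id hq
  have hsub : Sᶜ ∪ starConnComp S x₀ ⊆ (S \ starConnComp S x₀)ᶜ :=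
    fun z hz hz' => hz.elim (· hz'.1) (hz'.2 ·)
  have hpqV : ConnIn (S \ starConnComp S x₀)ᶜ p q :=
    ((ConnIn.of_latAdj (hsub (.inl (outerBd_starConnComp_subset hp))) (hsub (.inr ha)) hpa).trans
      (.of_mem_starConnComp hsub ha hb)).trans
      (.of_latAdj (hsub (.inr hb)) (hsub (.inl (outerBd_starConnComp_subset hq))) hqb.symm)
  simpa [Set.union_sdiff_cancel starConnComp_subset] using
    hpq.compl_union starSeparated_starConnComp_diff hpqV

end StarComponents

section Closure

variable {W : Set (Fin d → ℤ)} {a b e : Fin d → ℤ}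

theorem mem_clo_of_latAdj {w : Fin d → ℤ} (hew : latAdj e w) (hw : w ∈ W) : e ∈ clo W := by
  by_cases he : e ∈ W
  exacts [.inl he, .inr ⟨he, w, hw, hew⟩]

theorem exists_connIn_clo (he : e ∈ clo W) : ∃ w ∈ W, ConnIn (clo W) e w := by
  rcases he with he | ⟨he, w, hw, hew⟩
  exacts [⟨e, he, .refl (.inl he)⟩, ⟨w, hw, .of_latAdj (.inr ⟨he, w, hw, hew⟩) (.inl hw) hew⟩]

theorem ConnectedSet.clo (hW : ConnectedSet W) : ConnectedSet (clo W) := fun e₁ h₁ e₂ h₂ => by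
  obtain ⟨w₁, hw₁, h₁⟩ := exists_connIn_clo h₁
  obtain ⟨w₂, hw₂, h₂⟩ := exists_connIn_clo h₂
  exact (h₁.trans ((hW w₁ hw₁ w₂ hw₂).mono Set.subset_union_left)).trans h₂.symm

theorem ConnIn.compl_of_mem_clo_starConnComp {x₀ y₀ : Fin d → ℤ}
    (hdisj : Disjoint (starConnComp S x₀) (starConnComp S y₀))
    (ha : a ∈ clo (starConnComp S y₀)) (hb : b ∈ clo (starConnComp S y₀)) :
    ConnIn (starConnComp S x₀)ᶜ a b := by
  have hsub : Sᶜ ∪ clo (starConnComp S y₀) ⊆ (starConnComp S x₀)ᶜ := by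
    rintro z (hz | hz | hz) hzC
    · exact hz (starConnComp_subset hzC)
    · exact hdisj.notMem_of_mem_right hz hzC
    · exact outerBd_starConnComp_subset hz (starConnComp_subset hzC)
  obtain ⟨w₁, hw₁, h₁⟩ := exists_connIn_clo ha
  obtain ⟨w₂, hw₂, h₂⟩ := exists_connIn_clo hb
  exact ((h₁.mono (hsub.trans' Set.subset_union_right)).trans
    (.of_mem_starConnComp (hsub.trans' (Set.union_subset_union_right _ Set.subset_union_left))
      hw₁ hw₂)).trans (h₂.mono (hsub.trans' Set.subset_union_right)).symm

theorem ConnIn.inter_compl_or_exists_outerBd {U : Set (Fin d → ℤ)} (h : ConnIn T a b) (ha : a ∉ U) :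
    ConnIn (T ∩ Uᶜ) a b ∨ ∃ q ∈ outerBd U, ConnIn (T ∩ Uᶜ) a q := by
  rw [connIn_iff] at h
  obtain ⟨haT, h⟩ := h
  induction h with
  | refl => exact .inl (.refl ⟨haT, ha⟩)
  | @tail c e _ hce ih =>
    rcases ih with ih | ih
    · by_cases heU : e ∈ U
      · exact .inr ⟨c, ⟨ih.mem_right.2, e, heU, hce.1⟩, ih⟩
      · exact .inl (ih.trans (.of_latAdj ih.mem_right ⟨hce.2, heU⟩ hce.1))
    · exact .inr ih

end Closure

section Avoiding

variable {A W : Set (Fin d → ℤ)}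

theorem connAvoiding_of_mem_clo (hx : x ∈ clo W) : ConnAvoiding A x W := by
  rcases hx with hx | ⟨-, w, hw, hxw⟩
  · exact ⟨fun _ => x, 0, rfl, hx, by simp, by omega⟩
  · exact ⟨fun i => if i = 0 then x else w, 1, rfl, by simpa,
      fun i hi => by simp [Nat.lt_one_iff.1 hi, hxw], by omega⟩

theorem ConnAvoiding.cons (hxy : latAdj x y) (hy : y ∉ A) (h : ConnAvoiding A y W) :
    ConnAvoiding A x W := by
  obtain ⟨γ, k, h0, hk, hadj, havoid⟩ := h
  refine ⟨fun i => if i = 0 then x else γ (i - 1), k + 1, rfl, by simpa, fun i hi => ?_,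
    fun i h1 h2 => ?_⟩
  · rcases i with _ | i
    · simpa [h0]
    · simpa using hadj i (by omega)
  · rcases i with _ | _ | i
    · omega
    · simpa [h0]
    · simpa using havoid (i + 1) (by omega) (by omega)

theorem ConnAvoiding.of_connIn (hxy : ConnIn Aᶜ x y) (h : ConnAvoiding A y W) :
    ConnAvoiding A x W := by
  rw [connIn_iff] at hxy
  obtain ⟨-, hxy⟩ := hxy
  induction hxy using ReflTransGen.head_induction_on with
  | refl => exact h
  | head hac _ ih => exact ih.cons hac.1 hac.2

theorem connAvoiding_iff :
    ConnAvoiding A x W ↔ x ∈ clo W ∨ ∃ p e, latAdj x p ∧ ConnIn Aᶜ p e ∧ e ∈ clo W := by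
  refine ⟨fun ⟨γ, k, h0, hk, hadj, havoid⟩ => ?_, fun h => ?_⟩
  · subst h0
    match k, hk, hadj, havoid with
    | 0, hk, _, _ => exact .inl (.inl hk)
    | 1, hk, hadj, _ => exact .inl (mem_clo_of_latAdj (hadj 0 one_pos) hk)
    | k + 2, hk, hadj, havoid =>
      refine .inr ⟨γ 1, γ (k + 1), hadj 0 (by omega), ⟨fun i => γ (i + 1), k,
        ⟨fun i hi => havoid (i + 1) (by omega) (by omega), fun i hi => hadj (i + 1) (by omega)⟩,
        rfl, rfl⟩, mem_clo_of_latAdj (hadj (k + 1) (by omega)) hk⟩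
  · rcases h with hx | ⟨p, e, hxp, hpe, he⟩
    exacts [connAvoiding_of_mem_clo hx,
      ((connAvoiding_of_mem_clo he).of_connIn hpe).cons hxp hpe.mem_left]

end Avoiding

theorem exists_connIn_compl_of_outerBd {S W : Set (Fin d → ℤ)} {x₀ p e : Fin d → ℤ}
    (hW : ConnectedSet W ∨ IsStarComponent W S)
    (hcl : ∃ a ∈ clo (starConnComp S x₀), ∃ b ∈ clo W, ConnIn Sᶜ a b)
    (hp : p ∈ outerBd (starConnComp S x₀)) (he : e ∈ clo W)
    (hpe : ConnIn (starConnComp S x₀)ᶜ p e) :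
    ∃ e ∈ clo W, ConnIn Sᶜ p e := by
  set C := starConnComp S x₀
  by_contra! H
  have hescape : ∀ q ∈ outerBd C, ConnIn Cᶜ p q → ConnIn Sᶜ p q :=
    fun q hq => ConnIn.compl_of_mem_outerBd hp hq
  have hreach : ∀ b ∈ clo W, ConnIn Cᶜ p b := by
    intro b hb
    rcases hW with hW | ⟨y₀, -, rfl⟩
    · rcases (hW.clo e he b hb).inter_compl_or_exists_outerBd hpe.mem_right with h | ⟨q, hq, heq⟩
      · exact hpe.trans (h.mono Set.inter_subset_right)
      · exact absurd (hescape q hq (hpe.trans (heq.mono Set.inter_subset_right)))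
          (H q heq.mem_right.1)
    · have hdisj : Disjoint C (starConnComp S y₀) := Set.disjoint_left.2 fun z hzC hzD => by
        refine H p ?_ (.refl (outerBd_starConnComp_subset hp))
        rw [← starConnComp_eq_of_mem hzD, starConnComp_eq_of_mem hzC]
        exact .inr hp
      exact hpe.trans (ConnIn.compl_of_mem_clo_starConnComp hdisj he hb)
  obtain ⟨a, ha, b, hb, hab⟩ := hcl
  have ha' : a ∈ outerBd C := ha.resolve_left fun haC => hab.mem_left (starConnComp_subset haC)
  have hba : ConnIn Cᶜ b a := hab.symm.mono (Set.compl_subset_compl.2 starConnComp_subset)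
  exact H b hb ((hescape a ha' ((hreach b hb).trans hba)).trans hab)

end

theorem annular_connection_general {d : ℕ} (Sg U W : Set (Fin d → ℤ))
    (hU : IsStarComponent U Sg)
    (hW : ConnectedSet W ∨ IsStarComponent W Sg)
    (hcl : ∃ a ∈ clo U, ∃ b ∈ clo W, ConnIn Sgᶜ a b)
    (x : Fin d → ℤ) (hx : x ∈ U) (hπ : ConnAvoiding U x W) :
    ConnAvoiding Sg x W := by
  obtain ⟨x₀, -, rfl⟩ := hU
  rw [connAvoiding_iff] at hπ ⊢
  rcases hπ with hxW | ⟨p, e, hxp, hpe, he⟩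
  · exact .inl hxW
  have hp : p ∈ outerBd (starConnComp Sg x₀) := ⟨hpe.mem_left, x, hx, hxp.symm⟩
  obtain ⟨e', he', hpe'⟩ := exists_connIn_compl_of_outerBd hW hcl hp he hpe
  exact .inr ⟨p, e', hxp, hpe', he'⟩

/-- Lemma on annular connections: let `Sg` be finite, `U` a `*`-component of `Sg`, and `W`
finite and either connected or a `*`-component of `Sg`, with `U ⪯ W` and the closure of
`U` connected to the closure of `W` within `Sgᶜ`. Then any point of `U` connected to `W`
by a path whose interior avoids `U` is connected to `W` by a path whose interior
avoids `Sg`. -/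
theorem annular_connection {d : ℕ} (Sg U W : Set (Fin d → ℤ))
    (hSgfin : Sg.Finite) (hWfin : W.Finite)
    (hU : IsStarComponent U Sg)
    (hW : ConnectedSet W ∨ IsStarComponent W Sg)
    (hsurr : Surr U W)
    (hcl : ∃ a ∈ clo U, ∃ b ∈ clo W, ConnIn Sgᶜ a b)
    (x : Fin d → ℤ) (hx : x ∈ U) (hπ : ConnAvoiding U x W) :
    ConnAvoiding Sg x W :=
  annular_connection_general Sg U W hU hW hcl x hx hπ
end

section
/- Let S be a compound Poisson random variable: S = T_1 + ... + T_N where N ~ Poisson(lambda), lambda > 0, and (T_i) are i.i.d. exponential with mean 1, independent of N. Then for every theta > 1, P[S >= theta * lambda] <= exp(-lambda * (sqrt(theta) - 1)^2). -/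
/-!
Chernoff bound: for `0 ≤ a < 1`, `P[S ≥ θλ] ≤ e^{-aθλ} E[e^{aS}]`. Conditioning on `N` (independent
of the `T i`) and using `E[e^{a T}] = 1/(1-a)` gives the compound Poisson moment generating
function `E[e^{aS}] = E[(1-a)^{-N}] = exp(λ a/(1-a))`. The choice `a = 1 - 1/√θ` makes the
exponent `-aθλ + λa/(1-a)` equal to `-λ(√θ - 1)²`.
-/

open MeasureTheory ProbabilityTheory Real
open scoped ENNReal NNReal Nat

lemma lintegral_exp_mul_expMeasure {r a : ℝ} (hr : 0 < r) (ha : a < r) :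
    ∫⁻ x, ENNReal.ofReal (exp (a * x)) ∂expMeasure r = ENNReal.ofReal (r / (r - a)) := by
  have hra : 0 < r - a := sub_pos.2 ha
  have hdens : ∀ x, exponentialPDF r x * ENNReal.ofReal (exp (a * x)) =
      ENNReal.ofReal (r / (r - a)) * exponentialPDF (r - a) x := by
    intro x
    rcases le_or_gt 0 x with hx | hx
    · rw [exponentialPDF_of_nonneg hx, exponentialPDF_of_nonneg hx,
        ← ENNReal.ofReal_mul (by positivity), ← ENNReal.ofReal_mul (by positivity), mul_assoc,
        ← exp_add]
      congr 1
      field_simp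
      ring_nf
    · simp [exponentialPDF_of_neg hx]
  have hmeas (r : ℝ) : Measurable (exponentialPDF r) :=
    (measurable_exponentialPDFReal r).ennreal_ofReal
  rw [show expMeasure r = volume.withDensity (exponentialPDF r) from rfl,
    lintegral_withDensity_eq_lintegral_mul _ (hmeas r) (by fun_prop)]
  simp only [Pi.mul_apply, hdens]
  rw [lintegral_const_mul _ (hmeas _),
    lintegral_exponentialPDF_eq_one hra, mul_one]

lemma lintegral_pow_poissonMeasure (r : ℝ≥0) {c : ℝ} (hc : 0 ≤ c) :
    ∫⁻ n, ENNReal.ofReal c ^ n ∂poissonMeasure r = ENNReal.ofReal (exp (r * (c - 1))) := by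
  have hsum : HasSum (fun n ↦ exp (-r) * ((r * c) ^ n / n !)) (exp (r * (c - 1))) := by
    rw [show (r : ℝ) * (c - 1) = -r + r * c by ring, exp_add, exp_eq_exp_ℝ]
    exact (NormedSpace.expSeries_div_hasSum_exp ((r : ℝ) * c)).mul_left
      (NormedSpace.exp (-(r : ℝ)))
  rw [poissonMeasure, lintegral_sum_measure, ← hsum.tsum_eq,
    ENNReal.ofReal_tsum_of_nonneg (fun n ↦ by positivity) hsum.summable]
  refine tsum_congr fun n ↦ ?_
  rw [lintegral_smul_measure, lintegral_dirac, smul_eq_mul, ← ENNReal.ofReal_pow hc,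
    ← ENNReal.ofReal_mul (by positivity)]
  congr 1
  ring

lemma measurable_uncurry_sum_range :
    Measurable (Function.uncurry fun n (x : ℕ → ℝ) ↦ ∑ i ∈ Finset.range n, x i) :=
  measurable_from_prod_countable_right fun n ↦
    Finset.measurable_sum (Finset.range n) fun i _ ↦ measurable_pi_apply i

section

variable {Ω : Type*} [MeasurableSpace Ω] {μ : Measure Ω}

lemma map_eq_expMeasure [IsProbabilityMeasure μ] {X : Ω → ℝ} (hX : Measurable X) {r : ℝ}
    (hr : 0 < r) (h : ∀ t, 0 ≤ t → μ {ω | X ω ≤ t} = ENNReal.ofReal (1 - exp (-(r * t)))) :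
    μ.map X = expMeasure r := by
  have := isProbabilityMeasure_expMeasure hr
  refine Measure.ext_of_Iic _ _ fun t ↦ ?_
  rw [Measure.map_apply hX measurableSet_Iic, ← ofReal_cdf, cdf_expMeasure_eq hr]
  rcases le_or_gt 0 t with ht | ht
  · rw [if_pos ht]
    exact h t ht
  · rw [if_neg ht.not_ge, ENNReal.ofReal_zero]
    refine le_antisymm ?_ zero_le
    calc μ (X ⁻¹' Set.Iic t) ≤ μ {ω | X ω ≤ 0} := measure_mono fun ω hω ↦ le_trans hω ht.le
      _ = 0 := by simp [h 0 le_rfl]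

lemma map_eq_poissonMeasure {N : Ω → ℕ} (hN : Measurable N) (r : ℝ≥0)
    (h : ∀ n, μ {ω | N ω = n} = ENNReal.ofReal (exp (-r) * r ^ n / n !)) :
    μ.map N = poissonMeasure r :=
  Measure.ext_of_singleton fun n ↦ by
    rw [Measure.map_apply hN (measurableSet_singleton n), poissonMeasure_singleton]
    exact h n

lemma lintegral_exp_mul_sum_of_iIndepFun {ι : Type*} {T : ι → Ω → ℝ} (hT : iIndepFun T μ)
    (hTm : ∀ i, Measurable (T i)) (a : ℝ) (s : Finset ι) :
    ∫⁻ ω, ENNReal.ofReal (exp (a * ∑ i ∈ s, T i ω)) ∂μ =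
      ∏ i ∈ s, ∫⁻ ω, ENNReal.ofReal (exp (a * T i ω)) ∂μ := by
  simp_rw [Finset.mul_sum, exp_sum, ENNReal.ofReal_prod_of_nonneg fun _ _ ↦ (exp_nonneg _)]
  exact lintegral_prod_eq_prod_lintegral_of_indepFun s _
    (hT.comp (fun _ x ↦ ENNReal.ofReal (exp (a * x))) fun _ ↦ by fun_prop) fun i ↦ by fun_prop

lemma ProbabilityTheory.IndepFun.lintegral_eq_lintegral_map_lintegral [IsFiniteMeasure μ]
    {α β : Type*} [MeasurableSpace α] [MeasurableSpace β] {N : Ω → α} {X : Ω → β}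
    (hNX : IndepFun N X μ) (hN : Measurable N) (hX : Measurable X) {F : α → β → ℝ≥0∞}
    (hF : Measurable (Function.uncurry F)) :
    ∫⁻ ω, F (N ω) (X ω) ∂μ = ∫⁻ n, ∫⁻ ω, F n (X ω) ∂μ ∂μ.map N := by
  calc ∫⁻ ω, F (N ω) (X ω) ∂μ = ∫⁻ p, Function.uncurry F p ∂μ.map (fun ω ↦ (N ω, X ω)) :=
        (lintegral_map hF (hN.prodMk hX)).symm
    _ = ∫⁻ p, Function.uncurry F p ∂(μ.map N).prod (μ.map X) := by
        rw [(indepFun_iff_map_prod_eq_prod_map_map hN.aemeasurable hX.aemeasurable).1 hNX]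
    _ = ∫⁻ n, ∫⁻ x, F n x ∂μ.map X ∂μ.map N := lintegral_prod _ hF.aemeasurable
    _ = ∫⁻ n, ∫⁻ ω, F n (X ω) ∂μ ∂μ.map N := by
        refine lintegral_congr fun n ↦ ?_
        exact lintegral_map (hF.comp measurable_prodMk_left) hX

lemma lintegral_exp_mul_sum_range_of_map_eq_poissonMeasure {N : Ω → ℕ} {T : ℕ → Ω → ℝ}
    (hNm : Measurable N) (hTm : ∀ i, Measurable (T i)) (hT : iIndepFun T μ)
    (hNT : IndepFun N (fun ω i ↦ T i ω) μ) {r : ℝ≥0} (hN : μ.map N = poissonMeasure r)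
    {a c : ℝ} (hc : 0 ≤ c)
    (hmgf : ∀ i, ∫⁻ ω, ENNReal.ofReal (exp (a * T i ω)) ∂μ = ENNReal.ofReal c) :
    ∫⁻ ω, ENNReal.ofReal (exp (a * ∑ i ∈ Finset.range (N ω), T i ω)) ∂μ =
      ENNReal.ofReal (exp (r * (c - 1))) := by
  have := hT.isProbabilityMeasure
  rw [hNT.lintegral_eq_lintegral_map_lintegral hNm (measurable_pi_lambda _ hTm)
    (F := fun n x ↦ ENNReal.ofReal (exp (a * ∑ i ∈ Finset.range n, x i)))
    (measurable_uncurry_sum_range.const_mul a).exp.ennreal_ofReal, hN]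
  simp_rw [lintegral_exp_mul_sum_of_iIndepFun hT hTm, hmgf, Finset.prod_const, Finset.card_range]
  exact lintegral_pow_poissonMeasure r hc

lemma measure_ge_le_exp_mul_lintegral_exp {X : Ω → ℝ} (hX : AEMeasurable X μ) {a : ℝ}
    (ha : 0 ≤ a) (t : ℝ) :
    μ {ω | t ≤ X ω} ≤
      ENNReal.ofReal (exp (-(a * t))) * ∫⁻ ω, ENNReal.ofReal (exp (a * X ω)) ∂μ := by
  calc μ {ω | t ≤ X ω}
      ≤ μ {ω | ENNReal.ofReal (exp (a * t)) ≤ ENNReal.ofReal (exp (a * X ω))} :=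
        measure_mono fun ω hω ↦ ENNReal.ofReal_le_ofReal <| exp_le_exp.2 <|
          mul_le_mul_of_nonneg_left hω ha
    _ = ENNReal.ofReal (exp (-(a * t))) * (ENNReal.ofReal (exp (a * t)) *
          μ {ω | ENNReal.ofReal (exp (a * t)) ≤ ENNReal.ofReal (exp (a * X ω))}) := by
        rw [← mul_assoc, ← ENNReal.ofReal_mul (exp_nonneg _), ← exp_add, neg_add_cancel,
          exp_zero, ENNReal.ofReal_one, one_mul]
    _ ≤ _ := by
        gcongr
        exact mul_meas_ge_le_lintegral₀ (by fun_prop) _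

end

/-- Upper-deviation bound for a compound Poisson sum of unit-mean exponentials: if
`N ~ Poisson(lam)` and `(T i)` are i.i.d. exponential with mean `1`, all jointly
independent, and `S = T 0 + ⋯ + T (N-1)`, then for every `θ > 1`,
`P[S ≥ θ lam] ≤ exp(-lam (√θ - 1)²)`. -/
theorem compound_poisson_upper_tail {Ω : Type*} [MeasurableSpace Ω] (μ : Measure Ω)
    [IsProbabilityMeasure μ] (lam : ℝ) (hlam : 0 < lam)
    (N : Ω → ℕ) (T : ℕ → Ω → ℝ) (hNm : Measurable N) (hTm : ∀ i, Measurable (T i))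
    (hN : ∀ n : ℕ, μ {ω | N ω = n} =
      ENNReal.ofReal (Real.exp (-lam) * lam ^ n / (Nat.factorial n)))
    (hT : ∀ i, ∀ t : ℝ, 0 ≤ t → μ {ω | T i ω ≤ t} = ENNReal.ofReal (1 - Real.exp (-t)))
    (hTiid : iIndepFun T μ)
    (hNT : IndepFun N (fun ω i => T i ω) μ)
    (θ : ℝ) (hθ : 1 < θ) :
    μ {ω | θ * lam ≤ ∑ i ∈ Finset.range (N ω), T i ω} ≤
      ENNReal.ofReal (Real.exp (-lam * (Real.sqrt θ - 1) ^ 2)) := by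
  set s := √θ
  have hs : 1 < s := by simpa using Real.sqrt_lt_sqrt zero_le_one hθ
  have hθs : θ = s ^ 2 := (sq_sqrt (by linarith)).symm
  -- Chernoff parameter `a = 1 - 1/√θ`, for which `E[exp (a T)] = 1/(1 - a) = √θ`.
  set a := 1 - s⁻¹
  have ha : 0 ≤ a := sub_nonneg.2 (inv_le_one_of_one_le₀ hs.le)
  have hmgfT (i : ℕ) : ∫⁻ ω, ENNReal.ofReal (exp (a * T i ω)) ∂μ = ENNReal.ofReal s := by
    rw [← lintegral_map (f := fun x ↦ ENNReal.ofReal (exp (a * x))) (by fun_prop) (hTm i),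
      map_eq_expMeasure (hTm i) one_pos (by simpa only [one_mul] using hT i),
      lintegral_exp_mul_expMeasure one_pos (sub_lt_self 1 (inv_pos.2 (by linarith)))]
    congr 1
    simp
  have hmgfS := lintegral_exp_mul_sum_range_of_map_eq_poissonMeasure hNm hTm hTiid hNT
    (map_eq_poissonMeasure hNm lam.toNNReal (by simpa [hlam.le] using hN)) (by positivity) hmgfT
  rw [coe_toNNReal _ hlam.le] at hmgfS
  calc μ {ω | θ * lam ≤ ∑ i ∈ Finset.range (N ω), T i ω}
      ≤ ENNReal.ofReal (exp (-(a * (θ * lam)))) *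
          ∫⁻ ω, ENNReal.ofReal (exp (a * ∑ i ∈ Finset.range (N ω), T i ω)) ∂μ :=
        measure_ge_le_exp_mul_lintegral_exp
          (measurable_uncurry_sum_range.comp
            (hNm.prodMk (measurable_pi_lambda _ hTm))).aemeasurable ha _
    _ = ENNReal.ofReal (exp (-lam * (s - 1) ^ 2)) := by
        rw [hmgfS, ← ENNReal.ofReal_mul (exp_nonneg _), ← exp_add, hθs]
        congr 2
        simp only [a]
        field_simp
        ring
end
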